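/- arXiv:2603.02285 — 8 statements merged into one kernel-verified Lean document; each statement's English description precedes it below -/
import Mathlib

section
/- Under the structure constraint, if the language model matrix P_C ∈ ℝ^{N×|𝒞|} with entries (P_C)_{n,c} = pr_n(c) has full column rank, then for every x ∈ 𝒳 the conditional difference vector is recovered by the left-inverse: pr^C_x − q^C_x = P_C⁺ (pr^N_x − q^N_x), where P_C⁺ := (P_Cᵀ P_C)⁻¹ P_Cᵀ, (pr^C_x)_c = pr(x|c), (q^C_x)_c = q(x|c), (pr^N_x)_n = pr_n(x), and (q^N_x)_n = q_n(x). -/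
open Matrix

lemma marg_eq {X C : Type*} [Fintype X] [Fintype C] [DecidableEq X] [DecidableEq C]
    {N : ℕ} (prLM : (Fin N → C) → ℝ) (f : C → X → ℝ) (hf1 : ∀ c, ∑ x : X, f c x = 1)
    (n : Fin N) (x : X) :
    (∑ xs : Fin N → X, if xs n = x then
        (∑ cs : Fin N → C, prLM cs * ∏ m : Fin N, f (cs m) (xs m)) else 0)
      = ∑ cs : Fin N → C, prLM cs * f (cs n) x := by
  have step1 : ∀ xs : Fin N → X,
      (if xs n = x then (∑ cs : Fin N → C, prLM cs * ∏ m : Fin N, f (cs m) (xs m)) else 0)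
      = ∑ cs : Fin N → C, prLM cs * (if xs n = x then ∏ m : Fin N, f (cs m) (xs m) else 0) := by
    intro xs
    by_cases h : xs n = x <;> simp [h]
  simp only [step1]
  rw [Finset.sum_comm]
  refine Finset.sum_congr rfl fun cs _ => ?_
  rw [← Finset.mul_sum]
  congr 1
  have h1 : ∀ xs : Fin N → X,
      (if xs n = x then (∏ m : Fin N, f (cs m) (xs m)) else 0)
      = ∏ m : Fin N, (if m = n then (if xs m = x then f (cs m) (xs m) else 0)
          else f (cs m) (xs m)) := by
    intro xs
    by_cases h : xs n = x
    · simp only [h, if_true]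
      refine Finset.prod_congr rfl fun m _ => ?_
      by_cases hm : m = n <;> simp [hm, h]
    · simp only [h, if_false]
      refine (Finset.prod_eq_zero (Finset.mem_univ n) ?_).symm
      simp [h]
  set g : Fin N → X → ℝ := fun m y =>
    if m = n then (if y = x then f (cs m) y else 0) else f (cs m) y with hg
  have h2 : ∀ xs : Fin N → X,
      (∏ m : Fin N, if m = n then (if xs m = x then f (cs m) (xs m) else 0)
          else f (cs m) (xs m)) = ∏ m : Fin N, g m (xs m) := fun xs => rfl
  simp only [h1, h2]
  rw [← Fintype.piFinset_univ, ← Finset.prod_univ_sum (fun _ => Finset.univ) g]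
  rw [Finset.prod_eq_single n]
  · simp [hg]
  · intro m _ hm
    simp [hg, hm, hf1]
  · simp

lemma isUnit_of_rank_eq_card {C : Type*} [Fintype C] [DecidableEq C]
    (M : Matrix C C ℝ) (h : M.rank = Fintype.card C) : IsUnit M := by
  rw [← Matrix.mulVec_surjective_iff_isUnit]
  have hr : Module.finrank ℝ (LinearMap.range M.mulVecLin) =
      Module.finrank ℝ (C → ℝ) := by
    rw [Module.finrank_fintype_fun_eq_card]
    exact h
  have htop : LinearMap.range M.mulVecLin = ⊤ :=
    Submodule.eq_top_of_finrank_eq hr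
  intro y
  have := LinearMap.range_eq_top.mp htop y
  obtain ⟨z, hz⟩ := this
  exact ⟨z, hz⟩

/-- Under the structure constraint, if the language model matrix
`P_C ∈ ℝ^{N×|𝒞|}` with entries `(P_C)_{n,c} = pr_n(c)` has full column rank, then for every
`x ∈ 𝒳` the conditional difference vector is recovered by the left inverse:
`pr^C_x − q^C_x = P_C⁺ (pr^N_x − q^N_x)`, where `P_C⁺ = (P_Cᵀ P_C)⁻¹ P_Cᵀ`. -/
theorem left_inverse_recovers_conditional_difference
    {X C : Type*} [Fintype X] [Fintype C] [Nonempty X] [Nonempty C]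
    [DecidableEq X] [DecidableEq C]
    {N : ℕ} (hN : 0 < N)
    (prLM : (Fin N → C) → ℝ)            -- language model pr(c₁ᴺ)
    (prc qc : C → X → ℝ)                -- conditionals pr(x|c), q(x|c)
    (hprLM0 : ∀ cs, 0 ≤ prLM cs) (hprLM1 : ∑ cs : Fin N → C, prLM cs = 1)
    (hprc0 : ∀ c x, 0 ≤ prc c x) (hprc1 : ∀ c, ∑ x : X, prc c x = 1)
    (hqc0 : ∀ c x, 0 ≤ qc c x) (hqc1 : ∀ c, ∑ x : X, qc c x = 1)
    -- the language model matrix P_C with entries (P_C)_{n,c} = pr_n(c)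
    (P : Matrix (Fin N) C ℝ)
    (hP : ∀ (n : Fin N) (c : C), P n c = ∑ cs : Fin N → C, if cs n = c then prLM cs else 0)
    -- full column rank
    (hrank : P.rank = Fintype.card C) :
    ∀ x : X,
      (fun c : C => prc c x - qc c x) =
        ((Pᵀ * P)⁻¹ * Pᵀ).mulVec (fun n : Fin N =>
          (∑ xs : Fin N → X, if xs n = x then
              (∑ cs : Fin N → C, prLM cs * ∏ m : Fin N, prc (cs m) (xs m)) else 0) -
          (∑ xs : Fin N → X, if xs n = x then
              (∑ cs : Fin N → C, prLM cs * ∏ m : Fin N, qc (cs m) (xs m)) else 0)) := by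
  intro x
  set v : C → ℝ := fun c => prc c x - qc c x with hv
  have hvec : (fun n : Fin N =>
      (∑ xs : Fin N → X, if xs n = x then
          (∑ cs : Fin N → C, prLM cs * ∏ m : Fin N, prc (cs m) (xs m)) else 0) -
      (∑ xs : Fin N → X, if xs n = x then
          (∑ cs : Fin N → C, prLM cs * ∏ m : Fin N, qc (cs m) (xs m)) else 0))
      = P.mulVec v := by
    funext n
    rw [marg_eq prLM prc hprc1 n x, marg_eq prLM qc hqc1 n x]
    rw [Matrix.mulVec, dotProduct]
    simp only [hP, hv, Finset.sum_mul, ← Finset.sum_sub_distrib, ← mul_sub]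
    rw [Finset.sum_comm]
    refine Finset.sum_congr rfl fun cs _ => ?_
    simp [ite_mul]
  rw [hvec, Matrix.mulVec_mulVec]
  have hunit : IsUnit (Pᵀ * P) := by
    apply isUnit_of_rank_eq_card
    rw [Matrix.rank_transpose_mul_self]
    exact hrank
  have hinv : (Pᵀ * P)⁻¹ * Pᵀ * P = 1 := by
    rw [Matrix.mul_assoc, Matrix.nonsing_inv_mul _ ((Matrix.isUnit_iff_isUnit_det _).mp hunit)]
  rw [hinv, Matrix.one_mulVec]
end

section
/- Lemma 1: Assume the structure constraint holds and the language model matrix P_C has full column rank. Then for every real p ≥ 1, the ℓp distance between the conditional distributions is bounded by the induced ℓp norm of the left inverse times the ℓp distance between the position-dependent unigram marginals: (Σ_{x∈𝒳} Σ_{c∈𝒞} |pr(x|c) − q(x|c)|^p)^{1/p} ≤ ‖P_C⁺‖_p · (Σ_{n=1}^N Σ_{x∈𝒳} |pr_n(x) − q_n(x)|^p)^{1/p}, where ‖M‖_p := sup_{v ≠ 0} ‖Mv‖_p / ‖v‖_p. -/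
open Matrix

/-- The induced ℓp operator norm of a matrix: `‖M‖_p = sup_{v ≠ 0} ‖Mv‖_p / ‖v‖_p`,
where `‖u‖_p = (Σ_i |u_i|^p)^{1/p}`. -/
noncomputable def inducedLpNorm (p : ℝ) {m n : Type*} [Fintype m] [Fintype n]
    (M : Matrix m n ℝ) : ℝ :=
  ⨆ v : {v : n → ℝ // v ≠ 0},
    (∑ i, |M.mulVec v.1 i| ^ p) ^ (1 / p) / (∑ j, |v.1 j| ^ p) ^ (1 / p)

private lemma aux_sum_prod_if {X : Type*} [Fintype X] [DecidableEq X] {N : ℕ}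
    (g : Fin N → X → ℝ) (n : Fin N) (x : X) (h1 : ∀ m, ∑ y, g m y = 1) :
    ∑ xs : Fin N → X, (if xs n = x then ∏ m, g m (xs m) else 0) = g n x := by
  classical
  have hpt : ∀ xs : Fin N → X,
      (if xs n = x then ∏ m, g m (xs m) else 0)
        = ∏ m, (if m = n then (if xs m = x then g m (xs m) else 0) else g m (xs m)) := by
    intro xs
    by_cases h : xs n = x
    · rw [if_pos h]
      refine Finset.prod_congr rfl fun m _ => ?_
      by_cases hm : m = n
      · subst hm; simp [h]
      · simp [hm]
    · rw [if_neg h]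
      symm
      apply Finset.prod_eq_zero (Finset.mem_univ n)
      simp [h]
  rw [Finset.sum_congr rfl fun xs _ => hpt xs]
  rw [← Fintype.prod_sum (fun m y => if m = n then (if y = x then g m y else 0) else g m y)]
  rw [Finset.prod_eq_single n]
  · simp [Finset.sum_ite_eq' Finset.univ x (g n)]
  · intro m _ hm
    simp only [if_neg hm]
    exact h1 m
  · intro h; exact absurd (Finset.mem_univ n) h

private lemma aux_marginal {X C : Type*} [Fintype X] [Fintype C] [DecidableEq X]
    {N : ℕ} (prLM : (Fin N → C) → ℝ) (f : C → X → ℝ) (h1 : ∀ c, ∑ y, f c y = 1)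
    (n : Fin N) (x : X) :
    (∑ xs : Fin N → X, if xs n = x then
        (∑ cs : Fin N → C, prLM cs * ∏ m : Fin N, f (cs m) (xs m)) else 0)
      = ∑ cs : Fin N → C, prLM cs * f (cs n) x := by
  have h : ∀ xs : Fin N → X,
      (if xs n = x then ∑ cs : Fin N → C, prLM cs * ∏ m, f (cs m) (xs m) else 0)
        = ∑ cs : Fin N → C, prLM cs * (if xs n = x then ∏ m, f (cs m) (xs m) else 0) := by
    intro xs; split_ifs with hc <;> simp
  rw [Finset.sum_congr rfl fun xs _ => h xs, Finset.sum_comm]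
  refine Finset.sum_congr rfl fun cs _ => ?_
  rw [← Finset.mul_sum, aux_sum_prod_if (fun m => f (cs m)) n x (fun m => h1 (cs m))]

private lemma aux_abs_le_lpn {n : Type*} [Fintype n] {p : ℝ} (hp : 1 ≤ p)
    (v : n → ℝ) (j : n) : |v j| ≤ (∑ k, |v k| ^ p) ^ (1 / p) := by
  have hp0 : (0 : ℝ) < p := lt_of_lt_of_le one_pos hp
  have h1 : |v j| = (|v j| ^ p) ^ (1 / p) := by
    rw [one_div, Real.rpow_rpow_inv (abs_nonneg _) hp0.ne']
  rw [h1]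
  exact Real.rpow_le_rpow (Real.rpow_nonneg (abs_nonneg _) _)
    (Finset.single_le_sum (fun k _ => Real.rpow_nonneg (abs_nonneg _) _) (Finset.mem_univ j))
    (by positivity)

private lemma aux_lp_mulVec_le {m n : Type*} [Fintype m] [Fintype n] {p : ℝ} (hp : 1 ≤ p)
    (M : Matrix m n ℝ) (v : n → ℝ) :
    (∑ i, |M.mulVec v i| ^ p) ^ (1 / p)
      ≤ (∑ i, (∑ j, |M i j|) ^ p) ^ (1 / p) * (∑ j, |v j| ^ p) ^ (1 / p) := by
  have hp0 : (0 : ℝ) < p := lt_of_lt_of_le one_pos hp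
  set Nv := (∑ j, |v j| ^ p) ^ (1 / p) with hNvdef
  have hNv : 0 ≤ Nv := Real.rpow_nonneg (Finset.sum_nonneg fun j _ =>
    Real.rpow_nonneg (abs_nonneg _) _) _
  have key : ∀ i, |M.mulVec v i| ≤ (∑ j, |M i j|) * Nv := by
    intro i
    calc |M.mulVec v i| = |∑ j, M i j * v j| := by
            simp [Matrix.mulVec, dotProduct]
      _ ≤ ∑ j, |M i j * v j| := Finset.abs_sum_le_sum_abs _ _
      _ = ∑ j, |M i j| * |v j| := by simp [abs_mul]
      _ ≤ ∑ j, |M i j| * Nv := Finset.sum_le_sum fun j _ =>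
            mul_le_mul_of_nonneg_left (aux_abs_le_lpn hp v j) (abs_nonneg _)
      _ = (∑ j, |M i j|) * Nv := (Finset.sum_mul _ _ _).symm
  have hNvp : Nv ^ p = ∑ j, |v j| ^ p := by
    rw [hNvdef, one_div, Real.rpow_inv_rpow (Finset.sum_nonneg fun j _ =>
      Real.rpow_nonneg (abs_nonneg _) _) hp0.ne']
  have key2 : ∑ i, |M.mulVec v i| ^ p ≤ (∑ i, (∑ j, |M i j|) ^ p) * ∑ j, |v j| ^ p := by
    calc ∑ i, |M.mulVec v i| ^ p ≤ ∑ i, ((∑ j, |M i j|) * Nv) ^ p :=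
          Finset.sum_le_sum fun i _ =>
            Real.rpow_le_rpow (abs_nonneg _) (key i) hp0.le
      _ = ∑ i, (∑ j, |M i j|) ^ p * Nv ^ p := by
          refine Finset.sum_congr rfl fun i _ => ?_
          exact Real.mul_rpow (Finset.sum_nonneg fun j _ => abs_nonneg _) hNv
      _ = (∑ i, (∑ j, |M i j|) ^ p) * Nv ^ p := (Finset.sum_mul _ _ _).symm
      _ = (∑ i, (∑ j, |M i j|) ^ p) * ∑ j, |v j| ^ p := by rw [hNvp]
  have h := Real.rpow_le_rpow (Finset.sum_nonneg fun i _ =>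
    Real.rpow_nonneg (abs_nonneg _) _) key2 (by positivity : (0:ℝ) ≤ 1 / p)
  rwa [Real.mul_rpow (x := ∑ i, (∑ j, |M i j|) ^ p) (y := ∑ j, |v j| ^ p) (Finset.sum_nonneg fun i _ => Real.rpow_nonneg
    (Finset.sum_nonneg fun j _ => abs_nonneg _) _)
    (Finset.sum_nonneg fun j _ => Real.rpow_nonneg (abs_nonneg _) _)] at h

private lemma aux_lpn_pos {n : Type*} [Fintype n] {p : ℝ} (hp : 1 ≤ p)
    {v : n → ℝ} (hv : v ≠ 0) : 0 < (∑ j, |v j| ^ p) ^ (1 / p) := by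
  obtain ⟨j, hj⟩ := Function.ne_iff.mp hv
  have h1 : 0 < |v j| ^ p := Real.rpow_pos_of_pos (abs_pos.mpr hj) p
  have hs : 0 < ∑ j, |v j| ^ p := lt_of_lt_of_le h1
    (Finset.single_le_sum (fun k _ => Real.rpow_nonneg (abs_nonneg _) _) (Finset.mem_univ j))
  exact Real.rpow_pos_of_pos hs _

private lemma aux_bdd {m n : Type*} [Fintype m] [Fintype n] {p : ℝ} (hp : 1 ≤ p)
    (M : Matrix m n ℝ) :
    BddAbove (Set.range fun v : {v : n → ℝ // v ≠ 0} =>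
      (∑ i, |M.mulVec v.1 i| ^ p) ^ (1 / p) / (∑ j, |v.1 j| ^ p) ^ (1 / p)) := by
  refine ⟨(∑ i, (∑ j, |M i j|) ^ p) ^ (1 / p), ?_⟩
  rintro _ ⟨⟨v, hv⟩, rfl⟩
  rw [div_le_iff₀ (aux_lpn_pos hp hv)]
  exact aux_lp_mulVec_le hp M v

private lemma aux_norm_le {m n : Type*} [Fintype m] [Fintype n] {p : ℝ} (hp : 1 ≤ p)
    (M : Matrix m n ℝ) (v : n → ℝ) :
    (∑ i, |M.mulVec v i| ^ p) ^ (1 / p)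
      ≤ inducedLpNorm p M * (∑ j, |v j| ^ p) ^ (1 / p) := by
  have hp0 : (0 : ℝ) < p := lt_of_lt_of_le one_pos hp
  by_cases hv : v = 0
  · subst hv
    simp [Matrix.mulVec_zero, one_div, Real.zero_rpow hp0.ne',
      Real.zero_rpow (inv_ne_zero hp0.ne')]
  · have hvpos := aux_lpn_pos hp hv
    have hle := le_ciSup (aux_bdd hp M) (⟨v, hv⟩ : {v : n → ℝ // v ≠ 0})
    rw [div_le_iff₀ hvpos] at hle
    exact hle

private lemma aux_norm_nonneg {m n : Type*} [Fintype m] [Fintype n] [Nonempty n]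
    {p : ℝ} (hp : 1 ≤ p) (M : Matrix m n ℝ) : 0 ≤ inducedLpNorm p M := by
  have hv : (fun _ : n => (1 : ℝ)) ≠ 0 := by
    intro h
    have := congrFun h (Classical.arbitrary n)
    simp at this
  refine le_ciSup_of_le (aux_bdd hp M) ⟨_, hv⟩ ?_
  exact div_nonneg (Real.rpow_nonneg (Finset.sum_nonneg fun i _ =>
    Real.rpow_nonneg (abs_nonneg _) _) _)
    (Real.rpow_nonneg (Finset.sum_nonneg fun j _ => Real.rpow_nonneg (abs_nonneg _) _) _)

/-- Lemma 1: assume the structure constraint holds and the language model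
matrix `P_C` has full column rank. Then for every real `p ≥ 1`,
`(Σ_x Σ_c |pr(x|c) − q(x|c)|^p)^{1/p} ≤ ‖P_C⁺‖_p · (Σ_n Σ_x |pr_n(x) − q_n(x)|^p)^{1/p}`. -/
theorem lp_conditional_distance_le
    {X C : Type*} [Fintype X] [Fintype C] [Nonempty X] [Nonempty C]
    [DecidableEq X] [DecidableEq C]
    {N : ℕ} (hN : 0 < N)
    (prLM : (Fin N → C) → ℝ)            -- language model pr(c₁ᴺ)
    (prc qc : C → X → ℝ)                -- conditionals pr(x|c), q(x|c)
    (hprLM0 : ∀ cs, 0 ≤ prLM cs) (hprLM1 : ∑ cs : Fin N → C, prLM cs = 1)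
    (hprc0 : ∀ c x, 0 ≤ prc c x) (hprc1 : ∀ c, ∑ x : X, prc c x = 1)
    (hqc0 : ∀ c x, 0 ≤ qc c x) (hqc1 : ∀ c, ∑ x : X, qc c x = 1)
    -- the language model matrix P_C with entries (P_C)_{n,c} = pr_n(c)
    (P : Matrix (Fin N) C ℝ)
    (hP : ∀ (n : Fin N) (c : C), P n c = ∑ cs : Fin N → C, if cs n = c then prLM cs else 0)
    -- full column rank
    (hrank : P.rank = Fintype.card C)
    (p : ℝ) (hp : 1 ≤ p) :
    (∑ x : X, ∑ c : C, |prc c x - qc c x| ^ p) ^ (1 / p) ≤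
      inducedLpNorm p ((Pᵀ * P)⁻¹ * Pᵀ) *
        (∑ n : Fin N, ∑ x : X,
          |(∑ xs : Fin N → X, if xs n = x then
              (∑ cs : Fin N → C, prLM cs * ∏ m : Fin N, prc (cs m) (xs m)) else 0) -
            (∑ xs : Fin N → X, if xs n = x then
              (∑ cs : Fin N → C, prLM cs * ∏ m : Fin N, qc (cs m) (xs m)) else 0)| ^ p) ^
          (1 / p) := by
  classical
  have hp0 : (0 : ℝ) < p := lt_of_lt_of_le one_pos hp
  set M : Matrix C (Fin N) ℝ := (Pᵀ * P)⁻¹ * Pᵀ with hMdef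
  -- invertibility of PᵀP
  have hrank2 : (Pᵀ * P).rank = Fintype.card C := by
    rw [Matrix.rank_transpose_mul_self]; exact hrank
  have hdet : IsUnit (Pᵀ * P).det := by
    rw [← Matrix.isUnit_iff_isUnit_det, ← Matrix.mulVec_injective_iff_isUnit]
    have hsurj : Function.Surjective (Pᵀ * P).mulVecLin := by
      rw [← LinearMap.range_eq_top]
      apply Submodule.eq_top_of_finrank_eq
      rw [Matrix.rank] at hrank2
      rw [hrank2, Module.finrank_pi]
    exact (LinearMap.injective_iff_surjective_of_finrank_eq_finrank rfl).mpr hsurj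
  have hleft : ∀ v : C → ℝ, M.mulVec (P.mulVec v) = v := by
    intro v
    rw [Matrix.mulVec_mulVec, hMdef, Matrix.mul_assoc,
      Matrix.nonsing_inv_mul _ hdet, Matrix.one_mulVec]
  set d : X → C → ℝ := fun x c => prc c x - qc c x with hddef
  -- marginal identity
  have hu : ∀ (n : Fin N) (x : X),
      (∑ xs : Fin N → X, if xs n = x then
          (∑ cs : Fin N → C, prLM cs * ∏ m : Fin N, prc (cs m) (xs m)) else 0) -
        (∑ xs : Fin N → X, if xs n = x then
          (∑ cs : Fin N → C, prLM cs * ∏ m : Fin N, qc (cs m) (xs m)) else 0)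
      = P.mulVec (d x) n := by
    intro n x
    rw [aux_marginal prLM prc hprc1 n x, aux_marginal prLM qc hqc1 n x,
      ← Finset.sum_sub_distrib]
    have : P.mulVec (d x) n = ∑ c, P n c * d x c := by
      simp [Matrix.mulVec, dotProduct]
    rw [this]
    have : ∀ c, P n c * d x c
        = ∑ cs : Fin N → C, (if cs n = c then prLM cs * d x c else 0) := by
      intro c
      rw [hP n c, Finset.sum_mul]
      refine Finset.sum_congr rfl fun cs _ => ?_
      split_ifs <;> simp
    rw [Finset.sum_congr rfl fun c _ => this c, Finset.sum_comm]
    refine Finset.sum_congr rfl fun cs _ => ?_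
    rw [Finset.sum_ite_eq Finset.univ (cs n) (fun c => prLM cs * d x c), if_pos (Finset.mem_univ _)]
    rw [hddef]
    ring
  -- per-x bound
  have hx : ∀ x : X, (∑ c, |d x c| ^ p) ^ (1 / p)
      ≤ inducedLpNorm p M * (∑ n, |P.mulVec (d x) n| ^ p) ^ (1 / p) := by
    intro x
    have h1 : ∑ c, |d x c| ^ p = ∑ c, |M.mulVec (P.mulVec (d x)) c| ^ p := by
      rw [hleft (d x)]
    rw [h1]
    exact aux_norm_le hp M (P.mulVec (d x))
  have hS0 : 0 ≤ inducedLpNorm p M := by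
    have : Nonempty (Fin N) := ⟨⟨0, hN⟩⟩
    exact aux_norm_nonneg hp M
  -- raise per-x bounds to p-th power and sum
  have hxp : ∀ x : X, ∑ c, |d x c| ^ p
      ≤ inducedLpNorm p M ^ p * ∑ n, |P.mulVec (d x) n| ^ p := by
    intro x
    have h2 := Real.rpow_le_rpow (Real.rpow_nonneg (Finset.sum_nonneg fun c _ =>
      Real.rpow_nonneg (abs_nonneg _) _) _) (hx x) hp0.le
    have hA : ((∑ c, |d x c| ^ p) ^ (1 / p)) ^ p = ∑ c, |d x c| ^ p := by
      rw [one_div, Real.rpow_inv_rpow (Finset.sum_nonneg fun c _ =>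
        Real.rpow_nonneg (abs_nonneg _) _) hp0.ne']
    have hB : ((∑ n, |P.mulVec (d x) n| ^ p) ^ (1 / p)) ^ p
        = ∑ n, |P.mulVec (d x) n| ^ p := by
      rw [one_div, Real.rpow_inv_rpow (Finset.sum_nonneg fun n _ =>
        Real.rpow_nonneg (abs_nonneg _) _) hp0.ne']
    rwa [hA, Real.mul_rpow hS0 (Real.rpow_nonneg (Finset.sum_nonneg fun n _ =>
      Real.rpow_nonneg (abs_nonneg _) _) _), hB] at h2
  have hsum : ∑ x : X, ∑ c, |d x c| ^ p
      ≤ inducedLpNorm p M ^ p * ∑ n : Fin N, ∑ x : X, |P.mulVec (d x) n| ^ p := by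
    have hswap : ∑ n : Fin N, ∑ x : X, |P.mulVec (d x) n| ^ p
        = ∑ x : X, ∑ n : Fin N, |P.mulVec (d x) n| ^ p := Finset.sum_comm
    rw [hswap]
    calc ∑ x : X, ∑ c, |d x c| ^ p
        ≤ ∑ x : X, inducedLpNorm p M ^ p * ∑ n, |P.mulVec (d x) n| ^ p :=
          Finset.sum_le_sum fun x _ => hxp x
      _ = inducedLpNorm p M ^ p * ∑ x : X, ∑ n, |P.mulVec (d x) n| ^ p := by
          rw [Finset.mul_sum]
  -- conclude
  have hgoal : (∑ x : X, ∑ c, |d x c| ^ p) ^ (1 / p)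
      ≤ inducedLpNorm p M * (∑ n : Fin N, ∑ x : X, |P.mulVec (d x) n| ^ p) ^ (1 / p) := by
    have h3 := Real.rpow_le_rpow (Finset.sum_nonneg fun x _ => Finset.sum_nonneg fun c _ =>
      Real.rpow_nonneg (abs_nonneg _) _) hsum (by positivity : (0:ℝ) ≤ 1 / p)
    rw [Real.mul_rpow (Real.rpow_nonneg hS0 _) (Finset.sum_nonneg fun n _ =>
      Finset.sum_nonneg fun x _ => Real.rpow_nonneg (abs_nonneg _) _),
      one_div, Real.rpow_rpow_inv hS0 hp0.ne'] at h3
    simpa [one_div] using h3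
  calc (∑ x : X, ∑ c : C, |prc c x - qc c x| ^ p) ^ (1 / p)
      = (∑ x : X, ∑ c, |d x c| ^ p) ^ (1 / p) := rfl
    _ ≤ inducedLpNorm p M * (∑ n : Fin N, ∑ x : X, |P.mulVec (d x) n| ^ p) ^ (1 / p) := hgoal
    _ = _ := by
        have hBeq : (∑ n : Fin N, ∑ x : X,
            |(∑ xs : Fin N → X, if xs n = x then
                (∑ cs : Fin N → C, prLM cs * ∏ m : Fin N, prc (cs m) (xs m)) else 0) -
              (∑ xs : Fin N → X, if xs n = x then
                (∑ cs : Fin N → C, prLM cs * ∏ m : Fin N, qc (cs m) (xs m)) else 0)| ^ p)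
            = ∑ n : Fin N, ∑ x : X, |P.mulVec (d x) n| ^ p :=
          Finset.sum_congr rfl fun n _ => Finset.sum_congr rfl fun x _ => by rw [hu n x]
        rw [hBeq]
end

section
/- Under the structure constraint, the ℓ1 distance between the joint distributions is bounded by the language-model-weighted ℓ1 distance between the conditionals: Σ_{c₁ᴺ ∈ 𝒞ᴺ} Σ_{x₁ᴺ ∈ 𝒳ᴺ} |pr(c₁ᴺ, x₁ᴺ) − q(c₁ᴺ, x₁ᴺ)| ≤ Σ_{j=1}^N Σ_{c ∈ 𝒞} pr_j(c) Σ_{x ∈ 𝒳} |pr(x|c) − q(x|c)|. -/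
lemma prod_l1_telescope {X : Type*} [Fintype X] :
    ∀ (n : ℕ) (f g : Fin n → X → ℝ),
      (∀ i x, 0 ≤ f i x) → (∀ i, ∑ x : X, f i x = 1) →
      (∀ i x, 0 ≤ g i x) → (∀ i, ∑ x : X, g i x = 1) →
      ∑ xs : Fin n → X, |(∏ m, f m (xs m)) - ∏ m, g m (xs m)| ≤
        ∑ j : Fin n, ∑ x : X, |f j x - g j x| := by
  intro n
  induction n with
  | zero =>
      intro f g _ _ _ _
      simp
  | succ n ih =>
      intro f g hf0 hf1 hg0 hg1
      have key : ∑ xs : Fin (n+1) → X, |(∏ m, f m (xs m)) - ∏ m, g m (xs m)|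
          = ∑ p : X × (Fin n → X),
              |(∏ m, f m ((Fin.cons p.1 p.2 : Fin (n+1) → X) m)) - ∏ m, g m ((Fin.cons p.1 p.2 : Fin (n+1) → X) m)| := by
        rw [← Equiv.sum_comp (Fin.consEquiv (fun _ : Fin (n+1) => X))]
        rfl
      rw [key, Fintype.sum_prod_type]
      have hsplit : ∀ (x : X) (xs : Fin n → X),
          |(∏ m, f m ((Fin.cons x xs : Fin (n+1) → X) m)) - ∏ m, g m ((Fin.cons x xs : Fin (n+1) → X) m)| ≤
            f 0 x * |(∏ m : Fin n, f m.succ (xs m)) - ∏ m : Fin n, g m.succ (xs m)|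
            + |f 0 x - g 0 x| * ∏ m : Fin n, g m.succ (xs m) := by
        intro x xs
        have hpf : (∏ m, f m ((Fin.cons x xs : Fin (n+1) → X) m))
            = f 0 x * ∏ m : Fin n, f m.succ (xs m) := by
          rw [Fin.prod_univ_succ]; simp
        have hpg : (∏ m, g m ((Fin.cons x xs : Fin (n+1) → X) m))
            = g 0 x * ∏ m : Fin n, g m.succ (xs m) := by
          rw [Fin.prod_univ_succ]; simp
        rw [hpf, hpg]
        have : f 0 x * (∏ m : Fin n, f m.succ (xs m))
            - g 0 x * (∏ m : Fin n, g m.succ (xs m))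
            = f 0 x * ((∏ m : Fin n, f m.succ (xs m)) - ∏ m : Fin n, g m.succ (xs m))
              + (f 0 x - g 0 x) * ∏ m : Fin n, g m.succ (xs m) := by ring
        rw [this]
        refine (abs_add_le _ _).trans ?_
        rw [abs_mul, abs_mul, abs_of_nonneg (hf0 0 x),
          abs_of_nonneg (Finset.prod_nonneg (fun m _ => hg0 m.succ (xs m)))]
      calc ∑ x : X, ∑ xs : Fin n → X,
              |(∏ m, f m ((Fin.cons x xs : Fin (n+1) → X) m)) - ∏ m, g m ((Fin.cons x xs : Fin (n+1) → X) m)|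
          ≤ ∑ x : X, ∑ xs : Fin n → X,
              (f 0 x * |(∏ m : Fin n, f m.succ (xs m)) - ∏ m : Fin n, g m.succ (xs m)|
                + |f 0 x - g 0 x| * ∏ m : Fin n, g m.succ (xs m)) := by
            refine Finset.sum_le_sum fun x _ => Finset.sum_le_sum fun xs _ => hsplit x xs
        _ = (∑ x : X, f 0 x) * (∑ xs : Fin n → X,
              |(∏ m : Fin n, f m.succ (xs m)) - ∏ m : Fin n, g m.succ (xs m)|)
            + (∑ x : X, |f 0 x - g 0 x|) *
              (∑ xs : Fin n → X, ∏ m : Fin n, g m.succ (xs m)) := by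
            rw [Finset.sum_mul, Finset.sum_mul]
            rw [← Finset.sum_add_distrib]
            refine Finset.sum_congr rfl fun x _ => ?_
            rw [Finset.sum_add_distrib, Finset.mul_sum, Finset.mul_sum]
        _ ≤ ∑ j : Fin (n+1), ∑ x : X, |f j x - g j x| := by
            rw [hf1 0]
            have hgsum : (∑ xs : Fin n → X, ∏ m : Fin n, g m.succ (xs m)) = 1 := by
              have h := (Finset.prod_univ_sum (fun _ : Fin n => (Finset.univ : Finset X))
                (fun i x => g i.succ x))
              rw [Fintype.piFinset_univ] at h
              rw [← h]
              simp [hg1]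
            rw [hgsum, one_mul, mul_one, Fin.sum_univ_succ]
            rw [add_comm]
            gcongr
            exact ih (fun m => f m.succ) (fun m => g m.succ)
              (fun i x => hf0 i.succ x) (fun i => hf1 i.succ)
              (fun i x => hg0 i.succ x) (fun i => hg1 i.succ)

/-- Under the structure constraint, the ℓ1 distance between the joint
distributions is bounded by the language-model-weighted ℓ1 distance of the conditionals:
`Σ_{c₁ᴺ} Σ_{x₁ᴺ} |pr(c₁ᴺ,x₁ᴺ) − q(c₁ᴺ,x₁ᴺ)| ≤ Σ_j Σ_c pr_j(c) Σ_x |pr(x|c) − q(x|c)|`. -/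
theorem joint_l1_le_lm_weighted_conditional_l1
    {X C : Type*} [Fintype X] [Fintype C] [Nonempty X] [Nonempty C]
    [DecidableEq X] [DecidableEq C]
    {N : ℕ} (hN : 0 < N)
    (prLM : (Fin N → C) → ℝ)            -- language model pr(c₁ᴺ)
    (prc qc : C → X → ℝ)                -- conditionals pr(x|c), q(x|c)
    (hprLM0 : ∀ cs, 0 ≤ prLM cs) (hprLM1 : ∑ cs : Fin N → C, prLM cs = 1)
    (hprc0 : ∀ c x, 0 ≤ prc c x) (hprc1 : ∀ c, ∑ x : X, prc c x = 1)
    (hqc0 : ∀ c x, 0 ≤ qc c x) (hqc1 : ∀ c, ∑ x : X, qc c x = 1) :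
    (∑ cs : Fin N → C, ∑ xs : Fin N → X,
      |prLM cs * (∏ m : Fin N, prc (cs m) (xs m)) -
        prLM cs * ∏ m : Fin N, qc (cs m) (xs m)|) ≤
    ∑ j : Fin N, ∑ c : C,
      (∑ cs : Fin N → C, if cs j = c then prLM cs else 0) *
        ∑ x : X, |prc c x - qc c x| := by
  have hRHS : (∑ j : Fin N, ∑ c : C,
      (∑ cs : Fin N → C, if cs j = c then prLM cs else 0) *
        ∑ x : X, |prc c x - qc c x|)
      = ∑ cs : Fin N → C, prLM cs *
          ∑ j : Fin N, ∑ x : X, |prc (cs j) x - qc (cs j) x| := by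
    simp only [Finset.sum_mul]
    calc ∑ j : Fin N, ∑ c : C, ∑ cs : Fin N → C,
          (if cs j = c then prLM cs else 0) * ∑ x : X, |prc c x - qc c x|
        = ∑ j : Fin N, ∑ cs : Fin N → C, ∑ c : C,
            (if cs j = c then prLM cs else 0) * ∑ x : X, |prc c x - qc c x| :=
          Finset.sum_congr rfl fun j _ => Finset.sum_comm
      _ = ∑ j : Fin N, ∑ cs : Fin N → C,
            prLM cs * ∑ x : X, |prc (cs j) x - qc (cs j) x| := by
          simp [ite_mul]
      _ = ∑ cs : Fin N → C, ∑ j : Fin N,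
            prLM cs * ∑ x : X, |prc (cs j) x - qc (cs j) x| := Finset.sum_comm
      _ = ∑ cs : Fin N → C, prLM cs *
            ∑ j : Fin N, ∑ x : X, |prc (cs j) x - qc (cs j) x| := by
          simp [Finset.mul_sum]
  rw [hRHS]
  refine Finset.sum_le_sum fun cs _ => ?_
  have : ∑ xs : Fin N → X,
      |prLM cs * (∏ m : Fin N, prc (cs m) (xs m)) -
        prLM cs * ∏ m : Fin N, qc (cs m) (xs m)|
      = prLM cs * ∑ xs : Fin N → X,
          |(∏ m : Fin N, prc (cs m) (xs m)) - ∏ m : Fin N, qc (cs m) (xs m)| := by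
    rw [Finset.mul_sum]
    refine Finset.sum_congr rfl fun xs _ => ?_
    rw [← mul_sub, abs_mul, abs_of_nonneg (hprLM0 cs)]
  rw [this]
  refine mul_le_mul_of_nonneg_left ?_ (hprLM0 cs)
  exact prod_l1_telescope N (fun m => prc (cs m)) (fun m => qc (cs m))
    (fun i x => hprc0 (cs i) x) (fun i => hprc1 (cs i))
    (fun i x => hqc0 (cs i) x) (fun i => hqc1 (cs i))
end

section
/- Theorem 1: Assume the structure constraint holds and the language model matrix P_C has full column rank. Then the averaged ℓ1 distance of the local joint marginals is bounded by the ℓ1 distance between the observation-sequence marginals: D̄_q ≤ N² · ‖P_C⁺‖₁ · Σ_{x₁ᴺ ∈ 𝒳ᴺ} |pr(x₁ᴺ) − q(x₁ᴺ)|, where ‖M‖₁ := sup_{v ≠ 0} ‖Mv‖₁ / ‖v‖₁ is the induced ℓ1 norm and P_C⁺ := (P_Cᵀ P_C)⁻¹ P_Cᵀ. -/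
open Matrix Finset

/-- The induced ℓ1 operator norm of a matrix: `‖M‖₁ = sup_{v ≠ 0} ‖Mv‖₁ / ‖v‖₁`. -/
noncomputable def inducedL1Norm {m n : Type*} [Fintype m] [Fintype n]
    (M : Matrix m n ℝ) : ℝ :=
  ⨆ v : {v : n → ℝ // v ≠ 0},
    (∑ i, |M.mulVec v.1 i|) / (∑ j, |v.1 j|)

section Aux
variable {X : Type*} [Fintype X] [DecidableEq X]

lemma aux_sum_prod {N : ℕ} (f : Fin N → X → ℝ) :
    ∑ xs : Fin N → X, ∏ m, f m (xs m) = ∏ m, ∑ y, f m y :=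
  (Fintype.prod_sum f).symm

lemma aux_fix {N : ℕ} (f : Fin N → X → ℝ) (hf1 : ∀ m, ∑ y, f m y = 1)
    (n : Fin N) (x : X) :
    ∑ xs : Fin N → X, (if xs n = x then ∏ m, f m (xs m) else 0) = f n x := by
  have key : ∀ xs : Fin N → X,
      (if xs n = x then ∏ m, f m (xs m) else 0)
        = ∏ m, (if m = n then (if xs m = x then f m (xs m) else 0) else f m (xs m)) := by
    intro xs
    by_cases h : xs n = x
    · rw [if_pos h]
      refine Finset.prod_congr rfl fun m _ => ?_
      by_cases hm : m = n
      · subst hm; rw [if_pos rfl, if_pos h]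
      · rw [if_neg hm]
    · rw [if_neg h]
      refine (Finset.prod_eq_zero (Finset.mem_univ n) ?_).symm
      rw [if_pos rfl, if_neg h]
  calc ∑ xs : Fin N → X, (if xs n = x then ∏ m, f m (xs m) else 0)
      = ∑ xs : Fin N → X, ∏ m, (if m = n then (if xs m = x then f m (xs m) else 0)
          else f m (xs m)) := Finset.sum_congr rfl fun xs _ => key xs
    _ = ∏ m, ∑ y, (if m = n then (if y = x then f m y else 0) else f m y) :=
        aux_sum_prod (fun m y => if m = n then (if y = x then f m y else 0) else f m y)
    _ = ∏ m, (if m = n then f n x else 1) := by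
        refine Finset.prod_congr rfl fun m _ => ?_
        by_cases hm : m = n
        · subst hm; simp
        · simp [hm, hf1 m]
    _ = f n x := by simp

lemma aux_tv : ∀ {N : ℕ} (p q : Fin N → X → ℝ),
    (∀ m y, 0 ≤ p m y) → (∀ m, ∑ y, p m y = 1) →
    (∀ m y, 0 ≤ q m y) → (∀ m, ∑ y, q m y = 1) →
    ∑ xs : Fin N → X, |(∏ m, p m (xs m)) - ∏ m, q m (xs m)|
      ≤ ∑ m, ∑ y, |p m y - q m y| := by
  intro N
  induction N with
  | zero => intro p q _ _ _ _; simp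
  | succ N ih =>
    intro p q hp0 hp1 hq0 hq1
    have hsplit : ∑ xs : Fin (N+1) → X, |(∏ m, p m (xs m)) - ∏ m, q m (xs m)|
        = ∑ x : X, ∑ g : Fin N → X,
            |p 0 x * (∏ i : Fin N, p i.succ (g i)) -
              q 0 x * (∏ i : Fin N, q i.succ (g i))| := by
      calc ∑ xs : Fin (N+1) → X, |(∏ m, p m (xs m)) - ∏ m, q m (xs m)|
          = ∑ z : X × (Fin N → X),
              |p 0 z.1 * (∏ i : Fin N, p i.succ (z.2 i)) -
                q 0 z.1 * (∏ i : Fin N, q i.succ (z.2 i))| := by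
            refine (Fintype.sum_equiv (Fin.consEquiv fun _ => X) _ _ fun z => ?_).symm
            simp [Fin.prod_univ_succ, Fin.consEquiv]
        _ = _ := Fintype.sum_prod_type _
    rw [hsplit, Fin.sum_univ_succ]
    have hB : ∀ g : Fin N → X, (0:ℝ) ≤ ∏ i : Fin N, q i.succ (g i) :=
      fun g => Finset.prod_nonneg fun i _ => hq0 _ _
    have hptw : ∀ (x : X) (g : Fin N → X),
        |p 0 x * (∏ i : Fin N, p i.succ (g i)) - q 0 x * (∏ i : Fin N, q i.succ (g i))|
          ≤ p 0 x * |(∏ i : Fin N, p i.succ (g i)) - ∏ i : Fin N, q i.succ (g i)|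
            + |p 0 x - q 0 x| * (∏ i : Fin N, q i.succ (g i)) := by
      intro x g
      have : p 0 x * (∏ i : Fin N, p i.succ (g i)) - q 0 x * (∏ i : Fin N, q i.succ (g i))
          = p 0 x * ((∏ i : Fin N, p i.succ (g i)) - ∏ i : Fin N, q i.succ (g i))
            + (p 0 x - q 0 x) * (∏ i : Fin N, q i.succ (g i)) := by ring
      rw [this]
      refine (abs_add_le _ _).trans ?_
      rw [abs_mul, abs_mul, abs_of_nonneg (hp0 0 x), abs_of_nonneg (hB g)]
    calc ∑ x : X, ∑ g : Fin N → X, |p 0 x * (∏ i : Fin N, p i.succ (g i)) -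
            q 0 x * (∏ i : Fin N, q i.succ (g i))|
        ≤ ∑ x : X, ∑ g : Fin N → X,
            (p 0 x * |(∏ i : Fin N, p i.succ (g i)) - ∏ i : Fin N, q i.succ (g i)|
              + |p 0 x - q 0 x| * (∏ i : Fin N, q i.succ (g i))) := by
          refine Finset.sum_le_sum fun x _ => Finset.sum_le_sum fun g _ => hptw x g
      _ = (∑ x : X, p 0 x) * (∑ g : Fin N → X,
              |(∏ i : Fin N, p i.succ (g i)) - ∏ i : Fin N, q i.succ (g i)|)
            + (∑ x : X, |p 0 x - q 0 x|) * (∑ g : Fin N → X, ∏ i : Fin N, q i.succ (g i)) := by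
          simp [Finset.sum_add_distrib, ← Finset.mul_sum, ← Finset.sum_mul]
      _ = (∑ g : Fin N → X,
              |(∏ i : Fin N, p i.succ (g i)) - ∏ i : Fin N, q i.succ (g i)|)
            + (∑ x : X, |p 0 x - q 0 x|) := by
          rw [hp1 0, aux_sum_prod]
          simp [hq1]
      _ ≤ (∑ i : Fin N, ∑ y, |p i.succ y - q i.succ y|) + (∑ x : X, |p 0 x - q 0 x|) := by
          refine add_le_add ?_ le_rfl
          exact ih (fun i => p i.succ) (fun i => q i.succ)
            (fun i y => hp0 _ _) (fun i => hp1 _) (fun i y => hq0 _ _) (fun i => hq1 _)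
      _ = (∑ y, |p 0 y - q 0 y|) + ∑ i : Fin N, ∑ y, |p i.succ y - q i.succ y| := by ring

end Aux


section Op
variable {a b : Type*} [Fintype a] [Fintype b]

lemma aux_sum_abs_pos {v : b → ℝ} (hv : v ≠ 0) : 0 < ∑ j, |v j| := by
  obtain ⟨j, hj⟩ := Function.ne_iff.mp hv
  exact Finset.sum_pos' (fun j _ => abs_nonneg _) ⟨j, Finset.mem_univ j, abs_pos.mpr hj⟩

lemma aux_opnorm_bdd (M : Matrix a b ℝ) :
    BddAbove (Set.range fun v : {v : b → ℝ // v ≠ 0} =>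
      (∑ i, |M.mulVec v.1 i|) / (∑ j, |v.1 j|)) := by
  refine ⟨∑ i, ∑ j, |M i j|, ?_⟩
  rintro r ⟨⟨v, hv⟩, rfl⟩
  have hpos := aux_sum_abs_pos hv
  rw [div_le_iff₀ hpos]
  calc ∑ i, |M.mulVec v i| ≤ ∑ i, ∑ j, |M i j| * |v j| := by
        refine Finset.sum_le_sum fun i _ => ?_
        refine (Finset.abs_sum_le_sum_abs _ _).trans ?_
        simp [abs_mul]
    _ = ∑ j, (∑ i, |M i j|) * |v j| := by
        rw [Finset.sum_comm]
        simp [Finset.sum_mul]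
    _ ≤ ∑ j, (∑ i, ∑ j', |M i j'|) * |v j| := by
        refine Finset.sum_le_sum fun j _ => mul_le_mul_of_nonneg_right ?_ (abs_nonneg _)
        exact Finset.sum_le_sum fun i _ =>
          Finset.single_le_sum (fun j' _ => abs_nonneg (M i j')) (Finset.mem_univ j)
    _ = (∑ i, ∑ j', |M i j'|) * ∑ j, |v j| := by rw [← Finset.mul_sum]

lemma aux_opnorm_nonneg [Nonempty b] (M : Matrix a b ℝ) : 0 ≤ inducedL1Norm M := by
  have v0 : {v : b → ℝ // v ≠ 0} :=
    ⟨fun _ => 1, by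
      intro h
      have := congrFun h (Classical.arbitrary b)
      norm_num at this⟩
  refine le_trans ?_ (le_ciSup (aux_opnorm_bdd M) v0)
  positivity

lemma aux_opnorm_le (M : Matrix a b ℝ) (v : b → ℝ) :
    ∑ i, |M.mulVec v i| ≤ inducedL1Norm M * ∑ j, |v j| := by
  by_cases hv : v = 0
  · subst hv; simp [Matrix.mulVec_zero]
  · have hpos := aux_sum_abs_pos hv
    have h := le_ciSup (aux_opnorm_bdd M) ⟨v, hv⟩
    rw [div_le_iff₀ hpos] at h
    exact h

end Op

lemma aux_pinv {C : Type*} [Fintype C] [DecidableEq C] {N : ℕ}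
    (P : Matrix (Fin N) C ℝ) (hrank : P.rank = Fintype.card C) (v : C → ℝ) :
    ((Pᵀ * P)⁻¹ * Pᵀ).mulVec (P.mulVec v) = v := by
  have hr : (Pᵀ * P).rank = Fintype.card C := by
    rw [Matrix.rank_transpose_mul_self, hrank]
  have hsurj : Function.Surjective (Pᵀ * P).mulVec := by
    have htop : LinearMap.range (Pᵀ * P).mulVecLin = ⊤ := by
      apply Submodule.eq_top_of_finrank_eq
      rw [show Module.finrank ℝ ↥(LinearMap.range (Pᵀ * P).mulVecLin) = (Pᵀ * P).rank from rfl,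
        hr, Module.finrank_pi]
    intro y
    obtain ⟨x, hx⟩ := LinearMap.range_eq_top.mp htop y
    exact ⟨x, hx⟩
  have hunit : IsUnit (Pᵀ * P) := Matrix.mulVec_surjective_iff_isUnit.mp hsurj
  have hdet : IsUnit (Pᵀ * P).det := (Matrix.isUnit_iff_isUnit_det _).mp hunit
  rw [Matrix.mulVec_mulVec, Matrix.mul_assoc, Matrix.nonsing_inv_mul _ hdet, Matrix.one_mulVec]

/-- Theorem 1: assume the structure constraint holds and the language
model matrix `P_C` has full column rank. Then the averaged ℓ1 distance of the local joint
marginals is bounded by the ℓ1 distance between the observation-sequence marginals: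
`D̄_q ≤ N² · ‖P_C⁺‖₁ · Σ_{x₁ᴺ} |pr(x₁ᴺ) − q(x₁ᴺ)|`, with `P_C⁺ = (P_Cᵀ P_C)⁻¹ P_Cᵀ`. -/
theorem averaged_local_l1_le_observation_marginal_l1
    {X C : Type*} [Fintype X] [Fintype C] [Nonempty X] [Nonempty C]
    [DecidableEq X] [DecidableEq C]
    {N : ℕ} (hN : 0 < N)
    (prLM : (Fin N → C) → ℝ)            -- language model pr(c₁ᴺ)
    (prc qc : C → X → ℝ)                -- conditionals pr(x|c), q(x|c)
    (hprLM0 : ∀ cs, 0 ≤ prLM cs) (hprLM1 : ∑ cs : Fin N → C, prLM cs = 1)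
    (hprc0 : ∀ c x, 0 ≤ prc c x) (hprc1 : ∀ c, ∑ x : X, prc c x = 1)
    (hqc0 : ∀ c x, 0 ≤ qc c x) (hqc1 : ∀ c, ∑ x : X, qc c x = 1)
    -- the language model matrix P_C with entries (P_C)_{n,c} = pr_n(c)
    (P : Matrix (Fin N) C ℝ)
    (hP : ∀ (n : Fin N) (c : C), P n c = ∑ cs : Fin N → C, if cs n = c then prLM cs else 0)
    -- full column rank
    (hrank : P.rank = Fintype.card C) :
    (1 / N : ℝ) * ∑ n : Fin N, ∑ xs : Fin N → X, ∑ c : C,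
      |(∑ cs : Fin N → C, if cs n = c then
          prLM cs * ∏ m : Fin N, prc (cs m) (xs m) else 0) -
        ∑ cs : Fin N → C, if cs n = c then
          prLM cs * ∏ m : Fin N, qc (cs m) (xs m) else 0| ≤
    (N : ℝ) ^ 2 * inducedL1Norm ((Pᵀ * P)⁻¹ * Pᵀ) *
      ∑ xs : Fin N → X,
        |(∑ cs : Fin N → C, prLM cs * ∏ m : Fin N, prc (cs m) (xs m)) -
          ∑ cs : Fin N → C, prLM cs * ∏ m : Fin N, qc (cs m) (xs m)| := by
  classical
  have hFinN : Nonempty (Fin N) := ⟨⟨0, hN⟩⟩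
  set MM : Matrix C (Fin N) ℝ := (Pᵀ * P)⁻¹ * Pᵀ with hMM
  set d : C → X → ℝ := fun c x => prc c x - qc c x with hd
  set pr : (Fin N → X) → ℝ := fun xs => ∑ cs : Fin N → C, prLM cs * ∏ m, prc (cs m) (xs m)
    with hpr
  set qq : (Fin N → X) → ℝ := fun xs => ∑ cs : Fin N → C, prLM cs * ∏ m, qc (cs m) (xs m)
    with hqq
  set S : ℝ := ∑ xs : Fin N → X, |pr xs - qq xs| with hS
  set T : ℝ := ∑ c : C, ∑ x : X, |d c x| with hT
  have hS0 : 0 ≤ S := Finset.sum_nonneg fun _ _ => abs_nonneg _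
  have hMM0 : 0 ≤ inducedL1Norm MM := aux_opnorm_nonneg MM
  -- marginal of one coordinate
  have aux_marg : ∀ (f : C → X → ℝ), (∀ c, ∑ x : X, f c x = 1) → ∀ (n : Fin N) (x : X),
      ∑ xs : Fin N → X, (if xs n = x then ∑ cs : Fin N → C,
          prLM cs * ∏ m, f (cs m) (xs m) else 0)
        = ∑ cs : Fin N → C, prLM cs * f (cs n) x := by
    intro f hf1 n x
    calc ∑ xs : Fin N → X, (if xs n = x then ∑ cs : Fin N → C,
            prLM cs * ∏ m, f (cs m) (xs m) else 0)
        = ∑ xs : Fin N → X, ∑ cs : Fin N → C,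
            (if xs n = x then prLM cs * ∏ m, f (cs m) (xs m) else 0) := by
          refine Finset.sum_congr rfl fun xs _ => ?_
          split <;> simp
      _ = ∑ cs : Fin N → C, ∑ xs : Fin N → X,
            (if xs n = x then prLM cs * ∏ m, f (cs m) (xs m) else 0) := Finset.sum_comm
      _ = ∑ cs : Fin N → C, prLM cs * f (cs n) x := by
          refine Finset.sum_congr rfl fun cs _ => ?_
          have : ∀ xs : Fin N → X,
              (if xs n = x then prLM cs * ∏ m, f (cs m) (xs m) else 0)
                = prLM cs * (if xs n = x then ∏ m, f (cs m) (xs m) else 0) := by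
            intro xs; split <;> simp
          rw [Finset.sum_congr rfl fun xs _ => this xs, ← Finset.mul_sum,
            aux_fix (fun m => f (cs m)) (fun m => hf1 (cs m)) n x]
  -- the key identity for P *ᵥ (d · x)
  have hPmul : ∀ (n : Fin N) (x : X),
      P.mulVec (fun c => d c x) n
        = ∑ xs : Fin N → X, (if xs n = x then pr xs - qq xs else 0) := by
    intro n x
    have lhs : P.mulVec (fun c => d c x) n = ∑ cs : Fin N → C, prLM cs * d (cs n) x := by
      calc P.mulVec (fun c => d c x) n = ∑ c : C, P n c * d c x := by
            simp [Matrix.mulVec, dotProduct]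
        _ = ∑ c : C, ∑ cs : Fin N → C, (if cs n = c then prLM cs * d c x else 0) := by
            refine Finset.sum_congr rfl fun c _ => ?_
            rw [hP, Finset.sum_mul]
            refine Finset.sum_congr rfl fun cs _ => ?_
            split <;> simp
        _ = ∑ cs : Fin N → C, ∑ c : C, (if cs n = c then prLM cs * d c x else 0) :=
            Finset.sum_comm
        _ = ∑ cs : Fin N → C, prLM cs * d (cs n) x := by
            refine Finset.sum_congr rfl fun cs _ => ?_
            simpa using Finset.sum_ite_eq Finset.univ (cs n) (fun c => prLM cs * d c x)
    have rhs : ∑ xs : Fin N → X, (if xs n = x then pr xs - qq xs else 0)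
        = ∑ cs : Fin N → C, prLM cs * d (cs n) x := by
      calc ∑ xs : Fin N → X, (if xs n = x then pr xs - qq xs else 0)
          = ∑ xs : Fin N → X, ((if xs n = x then pr xs else 0) -
              (if xs n = x then qq xs else 0)) := by
            refine Finset.sum_congr rfl fun xs _ => ?_
            split <;> simp
        _ = (∑ xs : Fin N → X, (if xs n = x then pr xs else 0)) -
              ∑ xs : Fin N → X, (if xs n = x then qq xs else 0) :=
            Finset.sum_sub_distrib _ _
        _ = (∑ cs : Fin N → C, prLM cs * prc (cs n) x) -
              ∑ cs : Fin N → C, prLM cs * qc (cs n) x := by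
            rw [hpr, hqq, aux_marg prc hprc1 n x, aux_marg qc hqc1 n x]
        _ = ∑ cs : Fin N → C, prLM cs * d (cs n) x := by
            rw [← Finset.sum_sub_distrib]
            refine Finset.sum_congr rfl fun cs _ => ?_
            simp [hd, mul_sub]
    rw [lhs, rhs]
  -- column-difference bound via pseudo-inverse
  have hcol : ∀ x : X, ∑ c : C, |d c x|
      ≤ inducedL1Norm MM * ∑ n : Fin N, ∑ xs : Fin N → X,
          (if xs n = x then |pr xs - qq xs| else 0) := by
    intro x
    have hid : (fun c => d c x) = MM.mulVec (P.mulVec (fun c => d c x)) :=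
      (aux_pinv P hrank _).symm
    calc ∑ c : C, |d c x| = ∑ c : C, |MM.mulVec (P.mulVec (fun c => d c x)) c| := by
          refine Finset.sum_congr rfl fun c _ => ?_
          conv_lhs => rw [show d c x = (fun c => d c x) c from rfl, hid]
      _ ≤ inducedL1Norm MM * ∑ n : Fin N, |P.mulVec (fun c => d c x) n| :=
          aux_opnorm_le MM _
      _ ≤ inducedL1Norm MM * ∑ n : Fin N, ∑ xs : Fin N → X,
            (if xs n = x then |pr xs - qq xs| else 0) := by
          refine mul_le_mul_of_nonneg_left ?_ hMM0
          refine Finset.sum_le_sum fun n _ => ?_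
          rw [hPmul n x]
          refine (Finset.abs_sum_le_sum_abs _ _).trans ?_
          refine le_of_eq (Finset.sum_congr rfl fun xs _ => ?_)
          split <;> simp
  -- total variation of conditionals bound
  have hTbound : T ≤ inducedL1Norm MM * (N * S) := by
    calc T = ∑ x : X, ∑ c : C, |d c x| := Finset.sum_comm
      _ ≤ ∑ x : X, inducedL1Norm MM * ∑ n : Fin N, ∑ xs : Fin N → X,
            (if xs n = x then |pr xs - qq xs| else 0) :=
          Finset.sum_le_sum fun x _ => hcol x
      _ = inducedL1Norm MM * ∑ n : Fin N, ∑ xs : Fin N → X, ∑ x : X,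
            (if xs n = x then |pr xs - qq xs| else 0) := by
          rw [← Finset.mul_sum]
          congr 1
          rw [Finset.sum_comm]
          refine Finset.sum_congr rfl fun n _ => Finset.sum_comm
      _ = inducedL1Norm MM * (N * S) := by
          congr 1
          have : ∀ (n : Fin N) (xs : Fin N → X),
              ∑ x : X, (if xs n = x then |pr xs - qq xs| else 0) = |pr xs - qq xs| :=
            fun n xs => by simpa using Finset.sum_ite_eq Finset.univ (xs n) (fun _ => |pr xs - qq xs|)
          rw [Finset.sum_congr rfl fun n _ => Finset.sum_congr rfl fun xs _ => this n xs]
          simp [hS, Finset.sum_const, nsmul_eq_mul]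
  -- per-position bound
  have hAn : ∀ n : Fin N, ∑ xs : Fin N → X, ∑ c : C,
      |(∑ cs : Fin N → C, if cs n = c then
          prLM cs * ∏ m : Fin N, prc (cs m) (xs m) else 0) -
        ∑ cs : Fin N → C, if cs n = c then
          prLM cs * ∏ m : Fin N, qc (cs m) (xs m) else 0| ≤ N * T := by
    intro n
    have step1 : ∀ (xs : Fin N → X) (c : C),
        |(∑ cs : Fin N → C, if cs n = c then
            prLM cs * ∏ m : Fin N, prc (cs m) (xs m) else 0) -
          ∑ cs : Fin N → C, if cs n = c then
            prLM cs * ∏ m : Fin N, qc (cs m) (xs m) else 0|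
        ≤ ∑ cs : Fin N → C, (if cs n = c then
            prLM cs * |(∏ m : Fin N, prc (cs m) (xs m)) -
              ∏ m : Fin N, qc (cs m) (xs m)| else 0) := by
      intro xs c
      rw [← Finset.sum_sub_distrib]
      refine (Finset.abs_sum_le_sum_abs _ _).trans ?_
      refine Finset.sum_le_sum fun cs _ => ?_
      split
      · rw [← mul_sub, abs_mul, abs_of_nonneg (hprLM0 cs)]
      · simp
    calc ∑ xs : Fin N → X, ∑ c : C,
          |(∑ cs : Fin N → C, if cs n = c then
              prLM cs * ∏ m : Fin N, prc (cs m) (xs m) else 0) -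
            ∑ cs : Fin N → C, if cs n = c then
              prLM cs * ∏ m : Fin N, qc (cs m) (xs m) else 0|
        ≤ ∑ xs : Fin N → X, ∑ c : C, ∑ cs : Fin N → C, (if cs n = c then
            prLM cs * |(∏ m : Fin N, prc (cs m) (xs m)) -
              ∏ m : Fin N, qc (cs m) (xs m)| else 0) :=
          Finset.sum_le_sum fun xs _ => Finset.sum_le_sum fun c _ => step1 xs c
      _ = ∑ xs : Fin N → X, ∑ cs : Fin N → C,
            prLM cs * |(∏ m : Fin N, prc (cs m) (xs m)) -
              ∏ m : Fin N, qc (cs m) (xs m)| := by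
          refine Finset.sum_congr rfl fun xs _ => ?_
          rw [Finset.sum_comm]
          refine Finset.sum_congr rfl fun cs _ => ?_
          simpa using Finset.sum_ite_eq Finset.univ (cs n) (fun _ => prLM cs *
            |(∏ m : Fin N, prc (cs m) (xs m)) - ∏ m : Fin N, qc (cs m) (xs m)|)
      _ = ∑ cs : Fin N → C, prLM cs * ∑ xs : Fin N → X,
            |(∏ m : Fin N, prc (cs m) (xs m)) - ∏ m : Fin N, qc (cs m) (xs m)| := by
          rw [Finset.sum_comm]
          refine Finset.sum_congr rfl fun cs _ => ?_
          rw [Finset.mul_sum]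
      _ ≤ ∑ cs : Fin N → C, prLM cs * (N * T) := by
          refine Finset.sum_le_sum fun cs _ => mul_le_mul_of_nonneg_left ?_ (hprLM0 cs)
          refine (aux_tv (fun m => prc (cs m)) (fun m => qc (cs m))
            (fun m y => hprc0 _ _) (fun m => hprc1 _)
            (fun m y => hqc0 _ _) (fun m => hqc1 _)).trans ?_
          calc ∑ m : Fin N, ∑ y : X, |prc (cs m) y - qc (cs m) y|
              ≤ ∑ _m : Fin N, T := by
                refine Finset.sum_le_sum fun m _ => ?_
                exact Finset.single_le_sum
                  (f := fun c => ∑ y : X, |d c y|)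
                  (fun c _ => Finset.sum_nonneg fun y _ => abs_nonneg _)
                  (Finset.mem_univ (cs m))
            _ = N * T := by simp [Finset.sum_const, nsmul_eq_mul]
      _ = N * T := by rw [← Finset.sum_mul, hprLM1, one_mul]
  -- final assembly
  have hNpos : (0:ℝ) < N := by exact_mod_cast hN
  calc (1 / N : ℝ) * ∑ n : Fin N, ∑ xs : Fin N → X, ∑ c : C,
        |(∑ cs : Fin N → C, if cs n = c then
            prLM cs * ∏ m : Fin N, prc (cs m) (xs m) else 0) -
          ∑ cs : Fin N → C, if cs n = c then
            prLM cs * ∏ m : Fin N, qc (cs m) (xs m) else 0|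
      ≤ (1 / N : ℝ) * ∑ _n : Fin N, (N * T) := by
        refine mul_le_mul_of_nonneg_left ?_ (by positivity)
        exact Finset.sum_le_sum fun n _ => hAn n
    _ = N * T := by
        rw [Finset.sum_const]
        simp only [Finset.card_univ, Fintype.card_fin, nsmul_eq_mul]
        field_simp
    _ ≤ N * (inducedL1Norm MM * (N * S)) :=
        mul_le_mul_of_nonneg_left hTbound (le_of_lt hNpos)
    _ = (N : ℝ) ^ 2 * inducedL1Norm MM * S := by ring
end

section
/- Assume the structure constraint holds, the language model matrix P_C has full column rank, and q(x₁ᴺ) > 0 whenever pr(x₁ᴺ) > 0. Then for any Bayes decision rule and model decision rule, the squared averaged error mismatch is bounded by the Kullback–Leibler divergence of the observation-sequence marginals: (Δ̄_q)² ≤ 2 N⁴ ‖P_C⁺‖₁² · D_KL(pr(x₁ᴺ) ‖ q(x₁ᴺ)), where D_KL(pr ‖ q) := Σ_{x₁ᴺ : pr(x₁ᴺ)>0} pr(x₁ᴺ) log(pr(x₁ᴺ)/q(x₁ᴺ)). -/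
open Matrix

section AuxLemmas
open Real Set

/-- `log t ≥ 2(t-1)/(t+1)` for `t ≥ 1`, and `≤` for `0 < t ≤ 1`. -/
lemma k_deriv (t : ℝ) (ht : 0 < t) :
    HasDerivAt (fun s : ℝ => Real.log s - 2*(s-1)/(s+1)) (1/t - 4/(t+1)^2) t := by
  have h1 : HasDerivAt Real.log (1/t) t := by
    simpa [one_div] using Real.hasDerivAt_log (ne_of_gt ht)
  have h2 : HasDerivAt (fun s : ℝ => 2*(s-1)/(s+1)) (4/(t+1)^2) t := by
    have hn : HasDerivAt (fun s : ℝ => 2*(s-1)) 2 t := by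
      simpa using ((hasDerivAt_id t).sub_const 1).const_mul 2
    have hd : HasDerivAt (fun s : ℝ => s+1) 1 t := (hasDerivAt_id t).add_const 1
    have hne : t + 1 ≠ 0 := by linarith
    have := hn.div hd hne
    refine this.congr_deriv ?_
    field_simp
    ring
  exact h1.sub h2

lemma log_ge_aux {t : ℝ} (ht : 1 ≤ t) : 2*(t-1)/(t+1) ≤ Real.log t := by
  set f : ℝ → ℝ := fun s => Real.log s - 2*(s-1)/(s+1) with hf
  have hmono : MonotoneOn f (Ici 1) := by
    apply monotoneOn_of_deriv_nonneg (convex_Ici 1)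
    · intro s hs
      have hs' : (0:ℝ) < s := lt_of_lt_of_le one_pos hs
      exact ((k_deriv s hs').continuousAt).continuousWithinAt
    · intro s hs
      rw [interior_Ici] at hs
      have hs' : (0:ℝ) < s := lt_trans one_pos hs
      exact ((k_deriv s hs').differentiableAt).differentiableWithinAt
    · intro s hs
      rw [interior_Ici] at hs
      have hs' : (0:ℝ) < s := lt_trans one_pos hs
      rw [(k_deriv s hs').deriv]
      rw [sub_nonneg, div_le_div_iff₀ (by positivity) hs']
      nlinarith [sq_nonneg (s-1)]
  have h0 : f 1 = 0 := by simp [hf]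
  have := hmono (self_mem_Ici) (mem_Ici.mpr ht) ht
  rw [h0] at this
  simpa [hf, sub_nonneg] using this

lemma log_le_aux {t : ℝ} (ht0 : 0 < t) (ht : t ≤ 1) : Real.log t ≤ 2*(t-1)/(t+1) := by
  set f : ℝ → ℝ := fun s => Real.log s - 2*(s-1)/(s+1) with hf
  have hmono : MonotoneOn f (Ioc 0 1) := by
    apply monotoneOn_of_deriv_nonneg (convex_Ioc 0 1)
    · intro s hs
      exact ((k_deriv s hs.1).continuousAt).continuousWithinAt
    · intro s hs
      have hs' := interior_subset (s := Ioc (0:ℝ) 1) hs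
      exact ((k_deriv s hs'.1).differentiableAt).differentiableWithinAt
    · intro s hs
      have hs' := interior_subset (s := Ioc (0:ℝ) 1) hs
      rw [(k_deriv s hs'.1).deriv]
      rw [sub_nonneg, div_le_div_iff₀ (pow_pos (by linarith [hs'.1]) 2) hs'.1]
      nlinarith [sq_nonneg (s-1)]
  have h0 : f 1 = 0 := by simp [hf]
  have := hmono (mem_Ioc.mpr ⟨ht0, ht⟩) (mem_Ioc.mpr ⟨zero_lt_one, le_refl 1⟩) ht
  rw [h0] at this
  simpa [hf, sub_nonneg] using this

lemma H_deriv (t : ℝ) (ht : 0 < t) :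
    HasDerivAt (fun s : ℝ => (s^2+2*s)*Real.log s - (5*s^2-4*s-1)/2)
      ((2*t+2)*Real.log t - 4*t + 4) t := by
  have h1 : HasDerivAt (fun s : ℝ => (s^2+2*s)*Real.log s)
      ((2*t+2)*Real.log t + (t^2+2*t)*(1/t)) t := by
    have ha : HasDerivAt (fun s : ℝ => s^2+2*s) (2*t+2) t := by
      have := ((hasDerivAt_pow 2 t).add (((hasDerivAt_id t)).const_mul 2))
      exact this.congr_deriv (by norm_num)
    have hb : HasDerivAt Real.log (1/t) t := by
      simpa [one_div] using Real.hasDerivAt_log (ne_of_gt ht)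
    exact ha.mul hb
  have h2 : HasDerivAt (fun s : ℝ => (5*s^2-4*s-1)/2) ((10*t-4)/2) t := by
    have : HasDerivAt (fun s : ℝ => 5*s^2-4*s-1) (10*t-4) t := by
      have := (((hasDerivAt_pow 2 t).const_mul 5).sub ((hasDerivAt_id t).const_mul 4)).sub_const 1
      exact this.congr_deriv (by norm_num; ring)
    exact this.div_const 2
  have := h1.sub h2
  refine this.congr_deriv ?_
  field_simp
  ring

lemma H_nonneg {t : ℝ} (ht : 0 < t) :
    0 ≤ (t^2+2*t)*Real.log t - (5*t^2-4*t-1)/2 := by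
  set f : ℝ → ℝ := fun s => (s^2+2*s)*Real.log s - (5*s^2-4*s-1)/2 with hf
  have h0 : f 1 = 0 := by norm_num [hf]
  rcases le_total 1 t with h | h
  · have hmono : MonotoneOn f (Ici 1) := by
      apply monotoneOn_of_deriv_nonneg (convex_Ici 1)
      · intro s hs
        have hs' : (0:ℝ) < s := lt_of_lt_of_le one_pos hs
        exact ((H_deriv s hs').continuousAt).continuousWithinAt
      · intro s hs
        rw [interior_Ici] at hs
        have hs' : (0:ℝ) < s := lt_trans one_pos hs
        exact ((H_deriv s hs').differentiableAt).differentiableWithinAt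
      · intro s hs
        rw [interior_Ici] at hs
        have hs1 : (1:ℝ) ≤ s := le_of_lt hs
        have hs' : (0:ℝ) < s := lt_of_lt_of_le one_pos hs1
        rw [(H_deriv s hs').deriv]
        have hk := log_ge_aux hs1
        have h2 : 2*(s-1)/(s+1) * (2*s+2) ≤ Real.log s * (2*s+2) := by
          apply mul_le_mul_of_nonneg_right hk (by linarith)
        have h3 : 2*(s-1)/(s+1) * (2*s+2) = 4*(s-1) := by
          field_simp; ring
        nlinarith
    have := hmono self_mem_Ici (mem_Ici.mpr h) h
    rw [h0] at this; exact this
  · have hanti : AntitoneOn f (Ioc 0 1) := by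
      apply antitoneOn_of_deriv_nonpos (convex_Ioc 0 1)
      · intro s hs
        exact ((H_deriv s hs.1).continuousAt).continuousWithinAt
      · intro s hs
        have hs' := interior_subset (s := Ioc (0:ℝ) 1) hs
        exact ((H_deriv s hs'.1).differentiableAt).differentiableWithinAt
      · intro s hs
        have hs' := interior_subset (s := Ioc (0:ℝ) 1) hs
        rw [(H_deriv s hs'.1).deriv]
        have hk := log_le_aux hs'.1 hs'.2
        have h2 : Real.log s * (2*s+2) ≤ 2*(s-1)/(s+1) * (2*s+2) := by
          apply mul_le_mul_of_nonneg_right hk (by linarith [hs'.1])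
        have hne : s + 1 ≠ 0 := by nlinarith [hs'.1]
        have h3 : 2*(s-1)/(s+1) * (2*s+2) = 4*(s-1) := by
          field_simp
          ring
        nlinarith
    have := hanti (mem_Ioc.mpr ⟨ht, h⟩) (mem_Ioc.mpr ⟨zero_lt_one, le_refl 1⟩) h
    rw [h0] at this; exact this

lemma pinsker_pointwise (p q : ℝ) (hp : 0 ≤ p) (hq : 0 ≤ q) (h : 0 < p → 0 < q) :
    3/2 * (p-q)^2 / (p + 2*q) ≤ p * Real.log (p/q) + q - p := by
  rcases eq_or_lt_of_le hp with hp0 | hp'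
  · simp only [← hp0, Real.log_zero, zero_mul, zero_add, sub_zero, zero_sub, neg_mul]
    rcases eq_or_lt_of_le hq with hq0 | hq'
    · simp [← hq0]
    · rw [div_le_iff₀ (by linarith)]
      nlinarith
  · have hq' := h hp'
    have ht : 0 < p/q := div_pos hp' hq'
    have hH := H_nonneg ht
    have hpt : p = (p/q) * q := by field_simp
    rw [div_le_iff₀ (by linarith)]
    set L := Real.log (p/q) with hL
    set t := p/q with htt
    rw [hpt]
    nlinarith [mul_nonneg (mul_nonneg hq hq) hH]

lemma pinsker {I : Type*} [Fintype I] (p q : I → ℝ)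
    (hp0 : ∀ i, 0 ≤ p i) (hq0 : ∀ i, 0 ≤ q i)
    (habs : ∀ i, 0 < p i → 0 < q i)
    (hp1 : ∑ i, p i = 1) (hq1 : ∑ i, q i = 1) :
    (∑ i, |p i - q i|)^2 ≤ 2 * ∑ i, p i * Real.log (p i / q i) := by
  classical
  set w : I → ℝ := fun i => p i + 2 * q i with hw
  have hw0 : ∀ i, 0 ≤ w i := fun i => by
    have := hp0 i; have := hq0 i; simp only [hw]; linarith
  have hw3 : ∑ i, w i = 3 := by
    simp only [hw, Finset.sum_add_distrib, ← Finset.mul_sum, hp1, hq1]; norm_num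
  have cs := Finset.sum_mul_sq_le_sq_mul_sq Finset.univ
    (fun i => |p i - q i| / Real.sqrt (w i)) (fun i => Real.sqrt (w i))
  have h1 : ∀ i, |p i - q i| / Real.sqrt (w i) * Real.sqrt (w i) = |p i - q i| := by
    intro i
    rcases eq_or_lt_of_le (hw0 i) with h0 | h0
    · have hp : p i = 0 := by have := hp0 i; have := hq0 i; simp only [hw] at h0; linarith
      have hq : q i = 0 := by have := hp0 i; have := hq0 i; simp only [hw] at h0; linarith
      simp [hp, hq]
    · field_simp
  have h2 : ∀ i, (|p i - q i| / Real.sqrt (w i))^2 = (p i - q i)^2 / w i := by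
    intro i
    rw [div_pow, sq_abs, Real.sq_sqrt (hw0 i)]
  have h3 : ∀ i, (Real.sqrt (w i))^2 = w i := fun i => Real.sq_sqrt (hw0 i)
  simp only [h1, h2, h3] at cs
  rw [hw3] at cs
  have key : ∑ i, (p i - q i)^2 / w i ≤ (2/3) * ∑ i, p i * Real.log (p i / q i) := by
    have pointwise : ∀ i ∈ Finset.univ, (p i - q i)^2 / w i
        ≤ (2/3) * (p i * Real.log (p i / q i) + q i - p i) := by
      intro i _
      have h := pinsker_pointwise (p i) (q i) (hp0 i) (hq0 i) (habs i)
      rcases eq_or_lt_of_le (hw0 i) with h0 | h0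
      · have hp : p i = 0 := by have := hp0 i; have := hq0 i; simp only [hw] at h0; linarith
        have hq : q i = 0 := by have := hp0 i; have := hq0 i; simp only [hw] at h0; linarith
        simp [hp, hq]
      · have hwi : p i + 2 * q i ≠ 0 := by simp only [hw] at h0; linarith
        have heq : (p i - q i)^2 / w i = (2/3) * (3/2 * (p i - q i)^2 / (p i + 2*q i)) := by
          simp only [hw]
          field_simp
        rw [heq]
        have := mul_le_mul_of_nonneg_left h (by norm_num : (0:ℝ) ≤ 2/3)
        linarith
    calc ∑ i, (p i - q i)^2 / w i
        ≤ ∑ i, (2/3) * (p i * Real.log (p i / q i) + q i - p i) :=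
          Finset.sum_le_sum pointwise
      _ = (2/3) * ∑ i, p i * Real.log (p i / q i) := by
          rw [← Finset.mul_sum]
          congr 1
          simp only [add_sub_assoc]
          rw [Finset.sum_add_distrib, Finset.sum_sub_distrib, hp1, hq1]
          ring
  calc (∑ i, |p i - q i|)^2 ≤ (∑ i, (p i - q i)^2 / w i) * 3 := cs
    _ ≤ ((2/3) * ∑ i, p i * Real.log (p i / q i)) * 3 := by
        apply mul_le_mul_of_nonneg_right key (by norm_num)
    _ = 2 * ∑ i, p i * Real.log (p i / q i) := by ring

lemma inducedL1Norm_nonneg {m n : Type*} [Fintype m] [Fintype n] (M : Matrix m n ℝ) :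
    0 ≤ inducedL1Norm M := by
  apply Real.iSup_nonneg
  intro v
  apply div_nonneg <;> exact Finset.sum_nonneg fun _ _ => abs_nonneg _

lemma mulVec_l1_le {m n : Type*} [Fintype m] [Fintype n] (M : Matrix m n ℝ) (v : n → ℝ) :
    ∑ i, |M.mulVec v i| ≤ inducedL1Norm M * ∑ j, |v j| := by
  classical
  by_cases hv : v = 0
  · simp [hv, Matrix.mulVec_zero]
  · have hB : 0 < ∑ j, |v j| := by
      obtain ⟨j0, hj0⟩ := Function.ne_iff.mp hv
      have h1 : |v j0| ≤ ∑ j, |v j| :=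
        Finset.single_le_sum (fun j _ => abs_nonneg (v j)) (Finset.mem_univ j0)
      have h2 : 0 < |v j0| := abs_pos.mpr hj0
      linarith
    have hbdd : BddAbove (Set.range fun v : {v : n → ℝ // v ≠ 0} =>
        (∑ i, |M.mulVec v.1 i|) / (∑ j, |v.1 j|)) := by
      refine ⟨∑ i, ∑ j, |M i j|, ?_⟩
      rintro r ⟨w, rfl⟩
      have hBw : 0 < ∑ j, |w.1 j| := by
        obtain ⟨j0, hj0⟩ := Function.ne_iff.mp w.2
        have h1 : |w.1 j0| ≤ ∑ j, |w.1 j| :=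
          Finset.single_le_sum (fun j _ => abs_nonneg (w.1 j)) (Finset.mem_univ j0)
        have h2 : 0 < |w.1 j0| := abs_pos.mpr hj0
        linarith
      rw [div_le_iff₀ hBw]
      calc ∑ i, |M.mulVec w.1 i| ≤ ∑ i, ∑ j, |M i j * w.1 j| := by
            apply Finset.sum_le_sum
            intro i _
            exact Finset.abs_sum_le_sum_abs _ _
        _ ≤ ∑ i, ∑ j, |M i j| * ∑ j', |w.1 j'| := by
            apply Finset.sum_le_sum; intro i _
            apply Finset.sum_le_sum; intro j _
            rw [abs_mul]
            apply mul_le_mul_of_nonneg_left _ (abs_nonneg _)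
            exact Finset.single_le_sum (fun j' _ => abs_nonneg (w.1 j')) (Finset.mem_univ j)
        _ = (∑ i, ∑ j, |M i j|) * ∑ j', |w.1 j'| := by
            rw [Finset.sum_mul]
            exact Finset.sum_congr rfl fun i _ => (Finset.sum_mul _ _ _).symm
    have hle : (∑ i, |M.mulVec v i|) / (∑ j, |v j|) ≤ inducedL1Norm M :=
      le_ciSup hbdd (⟨v, hv⟩ : {v : n → ℝ // v ≠ 0})
    rw [div_le_iff₀ hB] at hle
    exact hle

lemma pinv_mul_eq_one {N : ℕ} {C : Type*} [Fintype C] [DecidableEq C]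
    (P : Matrix (Fin N) C ℝ) (hrank : P.rank = Fintype.card C) :
    ((Pᵀ * P)⁻¹ * Pᵀ) * P = 1 := by
  have h1 : (Pᵀ * P).rank = Fintype.card C := by
    rw [Matrix.rank_transpose_mul_self]; exact hrank
  have hdet : IsUnit (Pᵀ * P).det := by
    rw [isUnit_iff_ne_zero]
    intro hdet0
    obtain ⟨v, hv, hv0⟩ := Matrix.exists_mulVec_eq_zero_iff.mpr hdet0
    have hker : v ∈ LinearMap.ker (Pᵀ * P).mulVecLin :=
      LinearMap.mem_ker.mpr (by rw [Matrix.mulVecLin_apply]; exact hv0)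
    have hrn := LinearMap.finrank_range_add_finrank_ker (Pᵀ * P).mulVecLin
    rw [Module.finrank_pi] at hrn
    have hker0 : Module.finrank ℝ (LinearMap.ker (Pᵀ * P).mulVecLin) = 0 := by
      have : Matrix.rank (Pᵀ * P) = Module.finrank ℝ (LinearMap.range (Pᵀ * P).mulVecLin) := rfl
      omega
    rw [Submodule.finrank_eq_zero] at hker0
    rw [hker0] at hker
    exact hv (by simpa using hker)
  rw [Matrix.mul_assoc]
  exact Matrix.nonsing_inv_mul _ hdet

lemma sum_prod_univ {ι X : Type*} [Fintype ι] [DecidableEq ι] [Fintype X]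
    (f : ι → X → ℝ) : ∑ g : ι → X, ∏ i, f i (g i) = ∏ i, ∑ x, f i x := by
  rw [← Fintype.piFinset_univ, Finset.sum_prod_piFinset]

lemma sum_prod_fix {ι X : Type*} [Fintype ι] [DecidableEq ι] [Fintype X] [DecidableEq X]
    (f : ι → X → ℝ) (h1 : ∀ i, ∑ y, f i y = 1) (n : ι) (x : X) :
    ∑ g : ι → X, (if g n = x then ∏ i, f i (g i) else 0) = f n x := by
  classical
  set F : ι → X → ℝ := fun i y => if i = n then (if y = x then f n x else 0) else f i y with hF
  have key : ∀ g : ι → X, (if g n = x then ∏ i, f i (g i) else 0) = ∏ i, F i (g i) := by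
    intro g
    have h2 : ∏ i ∈ ({n}ᶜ : Finset ι), F i (g i) = ∏ i ∈ ({n}ᶜ : Finset ι), f i (g i) := by
      apply Finset.prod_congr rfl
      intro i hi
      have : i ≠ n := by simpa using hi
      simp [hF, this]
    have e1 : (∏ i, F i (g i)) = F n (g n) * ∏ i ∈ ({n}ᶜ : Finset ι), F i (g i) :=
      Fintype.prod_eq_mul_prod_compl n _
    have e2 : (∏ i, f i (g i)) = f n (g n) * ∏ i ∈ ({n}ᶜ : Finset ι), f i (g i) :=
      Fintype.prod_eq_mul_prod_compl n _
    rw [e1, e2, h2]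
    simp only [hF, if_pos rfl]
    by_cases hg : g n = x <;> simp [hg]
  rw [Finset.sum_congr rfl fun g _ => key g, sum_prod_univ]
  rw [Fintype.prod_eq_mul_prod_compl n]
  have h3 : ∏ i ∈ {n}ᶜ, ∑ y, F i y = 1 := by
    apply Finset.prod_eq_one
    intro i hi
    have hne : i ≠ n := by simpa using hi
    simp [hF, hne, h1 i]
  rw [h3]
  simp [hF]

lemma tv_prod {X : Type*} [Fintype X] [DecidableEq X] :
    ∀ (N : ℕ) (a b : Fin N → X → ℝ), (∀ n x, 0 ≤ a n x) → (∀ n x, 0 ≤ b n x) →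
    (∀ n, ∑ x, a n x = 1) → (∀ n, ∑ x, b n x = 1) →
    ∑ xs : Fin N → X, |(∏ m, a m (xs m)) - ∏ m, b m (xs m)| ≤ ∑ n, ∑ x, |a n x - b n x|
  | 0, a, b, _, _, _, _ => by simp
  | (N+1), a, b, ha0, hb0, ha1, hb1 => by
    classical
    have IH := tv_prod N (fun n => a n.succ) (fun n => b n.succ)
      (fun n x => ha0 n.succ x) (fun n x => hb0 n.succ x)
      (fun n => ha1 n.succ) (fun n => hb1 n.succ)
    have hsplit : ∑ xs : Fin (N+1) → X, |(∏ m, a m (xs m)) - ∏ m, b m (xs m)|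
        = ∑ p : X × (Fin N → X),
            |a 0 p.1 * (∏ m : Fin N, a m.succ (p.2 m))
              - b 0 p.1 * (∏ m : Fin N, b m.succ (p.2 m))| := by
      rw [← (Fin.consEquiv (fun _ : Fin (N+1) => X)).sum_comp]
      apply Finset.sum_congr rfl
      intro p _
      simp [Fin.consEquiv, Fin.prod_univ_succ]
    rw [hsplit, Fintype.sum_prod_type, Fin.sum_univ_succ]
    have hA1 : ∑ g : Fin N → X, ∏ m : Fin N, a m.succ (g m) = 1 := by
      rw [sum_prod_univ]
      exact Finset.prod_eq_one fun m _ => ha1 m.succ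
    calc ∑ x : X, ∑ g : Fin N → X,
            |a 0 x * (∏ m : Fin N, a m.succ (g m)) - b 0 x * (∏ m : Fin N, b m.succ (g m))|
        ≤ ∑ x : X, ∑ g : Fin N → X,
            (|a 0 x - b 0 x| * (∏ m : Fin N, a m.succ (g m))
              + b 0 x * |(∏ m : Fin N, a m.succ (g m)) - ∏ m : Fin N, b m.succ (g m)|) := by
          apply Finset.sum_le_sum; intro x _
          apply Finset.sum_le_sum; intro g _
          have hPA : 0 ≤ ∏ m : Fin N, a m.succ (g m) :=
            Finset.prod_nonneg fun m _ => ha0 m.succ (g m)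
          have habs : a 0 x * (∏ m : Fin N, a m.succ (g m))
              - b 0 x * (∏ m : Fin N, b m.succ (g m))
              = (a 0 x - b 0 x) * (∏ m : Fin N, a m.succ (g m))
                + b 0 x * ((∏ m : Fin N, a m.succ (g m)) - ∏ m : Fin N, b m.succ (g m)) := by
            ring
          rw [habs]
          calc |(a 0 x - b 0 x) * (∏ m : Fin N, a m.succ (g m))
                + b 0 x * ((∏ m : Fin N, a m.succ (g m)) - ∏ m : Fin N, b m.succ (g m))|
              ≤ |(a 0 x - b 0 x) * (∏ m : Fin N, a m.succ (g m))|
                + |b 0 x * ((∏ m : Fin N, a m.succ (g m)) - ∏ m : Fin N, b m.succ (g m))| :=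
                abs_add_le _ _
            _ = |a 0 x - b 0 x| * (∏ m : Fin N, a m.succ (g m))
                + b 0 x * |(∏ m : Fin N, a m.succ (g m)) - ∏ m : Fin N, b m.succ (g m)| := by
                rw [abs_mul, abs_mul, abs_of_nonneg hPA, abs_of_nonneg (hb0 0 x)]
      _ = ∑ x : X, |a 0 x - b 0 x|
            + ∑ g : Fin N → X, |(∏ m : Fin N, a m.succ (g m)) - ∏ m : Fin N, b m.succ (g m)| := by
          simp only [Finset.sum_add_distrib]
          congr 1
          · apply Finset.sum_congr rfl
            intro x _
            rw [← Finset.mul_sum, hA1, mul_one]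
          · simp only [← Finset.mul_sum]
            rw [← Finset.sum_mul, hb1 0, one_mul]
      _ ≤ ∑ x : X, |a 0 x - b 0 x| + ∑ n : Fin N, ∑ x, |a n.succ x - b n.succ x| := by
          have IH' : ∑ xs : Fin N → X,
              |(∏ m : Fin N, a m.succ (xs m)) - ∏ m : Fin N, b m.succ (xs m)|
              ≤ ∑ n : Fin N, ∑ x, |a n.succ x - b n.succ x| := by simpa using IH
          linarith

lemma group_sum {C : Type*} [Fintype C] [DecidableEq C] {N : ℕ}
    (w : (Fin N → C) → ℝ) (φ : C → ℝ) (n : Fin N) :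
    ∑ cs : Fin N → C, w cs * φ (cs n)
      = ∑ c : C, (∑ cs : Fin N → C, if cs n = c then w cs else 0) * φ c := by
  have h1 : ∀ c : C, (∑ cs : Fin N → C, if cs n = c then w cs else 0) * φ c
      = ∑ cs : Fin N → C, if cs n = c then w cs * φ c else 0 := by
    intro c
    rw [Finset.sum_mul]
    exact Finset.sum_congr rfl fun cs _ => by rw [ite_mul, zero_mul]
  rw [Finset.sum_congr rfl fun c _ => h1 c, Finset.sum_comm]
  apply Finset.sum_congr rfl
  intro cs _
  simp

lemma main_aux
    {X C : Type*} [Fintype X] [Fintype C] [Nonempty X] [Nonempty C]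
    [DecidableEq X] [DecidableEq C]
    {N : ℕ} (hN : 0 < N)
    (prLM : (Fin N → C) → ℝ)
    (prc qc : C → X → ℝ)
    (hprLM0 : ∀ cs, 0 ≤ prLM cs) (hprLM1 : ∑ cs : Fin N → C, prLM cs = 1)
    (hprc0 : ∀ c x, 0 ≤ prc c x) (hprc1 : ∀ c, ∑ x : X, prc c x = 1)
    (hqc0 : ∀ c x, 0 ≤ qc c x) (hqc1 : ∀ c, ∑ x : X, qc c x = 1)
    (P : Matrix (Fin N) C ℝ)
    (hP : ∀ (n : Fin N) (c : C), P n c = ∑ cs : Fin N → C, if cs n = c then prLM cs else 0)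
    (hrank : P.rank = Fintype.card C)
    (cstar cq : (Fin N → X) → Fin N → C)
    (hcstar : ∀ (xs : Fin N → X) (n : Fin N) (c : C),
      (∑ cs : Fin N → C, if cs n = c then
          prLM cs * ∏ m : Fin N, prc (cs m) (xs m) else 0) ≤
        ∑ cs : Fin N → C, if cs n = cstar xs n then
          prLM cs * ∏ m : Fin N, prc (cs m) (xs m) else 0)
    (hcq : ∀ (xs : Fin N → X) (n : Fin N) (c : C),
      (∑ cs : Fin N → C, if cs n = c then
          prLM cs * ∏ m : Fin N, qc (cs m) (xs m) else 0) ≤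
        ∑ cs : Fin N → C, if cs n = cq xs n then
          prLM cs * ∏ m : Fin N, qc (cs m) (xs m) else 0)
    (prX qX : (Fin N → X) → ℝ)
    (hprX : ∀ xs, prX xs = ∑ cs : Fin N → C, prLM cs * ∏ m : Fin N, prc (cs m) (xs m))
    (hqX : ∀ xs, qX xs = ∑ cs : Fin N → C, prLM cs * ∏ m : Fin N, qc (cs m) (xs m))
    (habs : ∀ xs : Fin N → X, 0 < prX xs → 0 < qX xs) :
    ((1 / N : ℝ) * ∑ n : Fin N, ∑ xs : Fin N → X,
        ((∑ cs : Fin N → C, if cs n = cstar xs n then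
            prLM cs * ∏ m : Fin N, prc (cs m) (xs m) else 0) -
          ∑ cs : Fin N → C, if cs n = cq xs n then
            prLM cs * ∏ m : Fin N, prc (cs m) (xs m) else 0)) ^ 2 ≤
      2 * (N : ℝ) ^ 4 * inducedL1Norm ((Pᵀ * P)⁻¹ * Pᵀ) ^ 2 *
        ∑ xs : Fin N → X,
          if 0 < prX xs then prX xs * Real.log (prX xs / qX xs) else 0 := by
  classical
  set Q : Matrix C (Fin N) ℝ := (Pᵀ * P)⁻¹ * Pᵀ with hQdef
  have hQP : Q * P = 1 := pinv_mul_eq_one P hrank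
  set nQ : ℝ := inducedL1Norm Q with hnQdef
  have hnQ0 : 0 ≤ nQ := inducedL1Norm_nonneg Q
  -- basic positivity and normalization
  have hprX0 : ∀ xs, 0 ≤ prX xs := by
    intro xs; rw [hprX]
    exact Finset.sum_nonneg fun cs _ =>
      mul_nonneg (hprLM0 cs) (Finset.prod_nonneg fun m _ => hprc0 _ _)
  have hqX0 : ∀ xs, 0 ≤ qX xs := by
    intro xs; rw [hqX]
    exact Finset.sum_nonneg fun cs _ =>
      mul_nonneg (hprLM0 cs) (Finset.prod_nonneg fun m _ => hqc0 _ _)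
  have hsum1 : ∀ (cond : C → X → ℝ), (∀ c, ∑ x, cond c x = 1) →
      ∑ xs : Fin N → X, ∑ cs : Fin N → C, prLM cs * ∏ m : Fin N, cond (cs m) (xs m) = 1 := by
    intro cond h1
    rw [Finset.sum_comm]
    have heach : ∀ cs : Fin N → C,
        ∑ xs : Fin N → X, prLM cs * ∏ m : Fin N, cond (cs m) (xs m) = prLM cs := by
      intro cs
      rw [← Finset.mul_sum, sum_prod_univ (fun m => cond (cs m))]
      simp [h1]
    rw [Finset.sum_congr rfl fun cs _ => heach cs]
    exact hprLM1
  have hprX1 : ∑ xs : Fin N → X, prX xs = 1 := by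
    rw [Finset.sum_congr rfl fun xs _ => hprX xs]; exact hsum1 prc hprc1
  have hqX1 : ∑ xs : Fin N → X, qX xs = 1 := by
    rw [Finset.sum_congr rfl fun xs _ => hqX xs]; exact hsum1 qc hqc1
  -- abbreviations
  set T : ℝ := ∑ xs : Fin N → X, |prX xs - qX xs| with hTdef
  have hT0 : 0 ≤ T := Finset.sum_nonneg fun _ _ => abs_nonneg _
  set KL : ℝ := ∑ xs : Fin N → X, prX xs * Real.log (prX xs / qX xs) with hKLdef
  set δ : C → ℝ := fun c => ∑ x, |prc c x - qc c x| with hδdef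
  have hδ0 : ∀ c, 0 ≤ δ c := fun c => Finset.sum_nonneg fun _ _ => abs_nonneg _
  set S : ℝ := ∑ xs : Fin N → X, ∑ cs : Fin N → C,
      |prLM cs * (∏ m : Fin N, prc (cs m) (xs m))
        - prLM cs * (∏ m : Fin N, qc (cs m) (xs m))| with hSdef
  -- marginal identity
  have hmarg : ∀ (cond : C → X → ℝ), (∀ c, ∑ y, cond c y = 1) → ∀ (n : Fin N) (x : X),
      (∑ c, P n c * cond c x)
        = ∑ xs : Fin N → X, (if xs n = x then
            ∑ cs : Fin N → C, prLM cs * ∏ m : Fin N, cond (cs m) (xs m) else 0) := by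
    intro cond h1 n x
    have lhs : (∑ c, P n c * cond c x) = ∑ cs : Fin N → C, prLM cs * cond (cs n) x := by
      rw [Finset.sum_congr rfl fun c _ => by rw [hP n c]]
      exact (group_sum prLM (fun c => cond c x) n).symm
    have rhs : (∑ xs : Fin N → X, (if xs n = x then
            ∑ cs : Fin N → C, prLM cs * ∏ m : Fin N, cond (cs m) (xs m) else 0))
        = ∑ cs : Fin N → C, prLM cs * cond (cs n) x := by
      have hsplit : ∀ xs : Fin N → X, (if xs n = x then
            ∑ cs : Fin N → C, prLM cs * ∏ m : Fin N, cond (cs m) (xs m) else 0)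
          = ∑ cs : Fin N → C, (if xs n = x then
              prLM cs * ∏ m : Fin N, cond (cs m) (xs m) else 0) := by
        intro xs; split <;> simp
      rw [Finset.sum_congr rfl fun xs _ => hsplit xs, Finset.sum_comm]
      apply Finset.sum_congr rfl
      intro cs _
      have : ∀ xs : Fin N → X, (if xs n = x then
            prLM cs * ∏ m : Fin N, cond (cs m) (xs m) else 0)
          = prLM cs * (if xs n = x then ∏ m : Fin N, cond (cs m) (xs m) else 0) := by
        intro xs; split <;> simp
      rw [Finset.sum_congr rfl fun xs _ => this xs, ← Finset.mul_sum,
        sum_prod_fix (fun m => cond (cs m)) (fun m => h1 (cs m)) n x]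
    rw [lhs, ← rhs]
  -- step: column sums of P bounded by 1
  have hPle1 : ∀ (n : Fin N) (c : C), P n c ≤ 1 := by
    intro n c
    rw [hP n c, ← hprLM1]
    apply Finset.sum_le_sum
    intro cs _
    split
    · exact le_refl _
    · exact hprLM0 cs
  have hP0 : ∀ (n : Fin N) (c : C), 0 ≤ P n c := by
    intro n c
    rw [hP n c]
    apply Finset.sum_nonneg
    intro cs _
    split
    · exact hprLM0 cs
    · exact le_refl _
  -- P applied to the conditional differences
  have hPd : ∀ (x : X) (n : Fin N),
      P.mulVec (fun c => prc c x - qc c x) n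
        = ∑ xs : Fin N → X, (if xs n = x then prX xs - qX xs else 0) := by
    intro x n
    have : P.mulVec (fun c => prc c x - qc c x) n
        = (∑ c, P n c * prc c x) - ∑ c, P n c * qc c x := by
      simp only [Matrix.mulVec, dotProduct, mul_sub, Finset.sum_sub_distrib]
    rw [this, hmarg prc hprc1 n x, hmarg qc hqc1 n x, ← Finset.sum_sub_distrib]
    apply Finset.sum_congr rfl
    intro xs _
    rw [hprX, hqX]
    split <;> simp
  -- bound on the sum of conditional TVs
  have hδsum : ∑ c, δ c ≤ nQ * ((N:ℝ) * T) := by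
    have h1 : ∑ c, δ c = ∑ x : X, ∑ c : C, |prc c x - qc c x| := by
      rw [Finset.sum_comm]
    have h2 : ∀ x : X, ∑ c : C, |prc c x - qc c x|
        ≤ nQ * ∑ n : Fin N, |P.mulVec (fun c => prc c x - qc c x) n| := by
      intro x
      have hrec : (fun c => prc c x - qc c x)
          = Q.mulVec (P.mulVec (fun c => prc c x - qc c x)) := by
        rw [Matrix.mulVec_mulVec, hQP, Matrix.one_mulVec]
      calc ∑ c : C, |prc c x - qc c x|
          = ∑ c : C, |Q.mulVec (P.mulVec (fun c => prc c x - qc c x)) c| := by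
            rw [← hrec]
        _ ≤ nQ * ∑ n : Fin N, |P.mulVec (fun c => prc c x - qc c x) n| :=
            mulVec_l1_le Q _
    have h3 : ∀ x : X, ∑ n : Fin N, |P.mulVec (fun c => prc c x - qc c x) n|
        ≤ ∑ n : Fin N, ∑ xs : Fin N → X, (if xs n = x then |prX xs - qX xs| else 0) := by
      intro x
      apply Finset.sum_le_sum
      intro n _
      rw [hPd x n]
      calc |∑ xs : Fin N → X, (if xs n = x then prX xs - qX xs else 0)|
          ≤ ∑ xs : Fin N → X, |if xs n = x then prX xs - qX xs else 0| :=
            Finset.abs_sum_le_sum_abs _ _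
        _ = ∑ xs : Fin N → X, (if xs n = x then |prX xs - qX xs| else 0) := by
            apply Finset.sum_congr rfl
            intro xs _
            split <;> simp
    have h4 : ∑ x : X, ∑ n : Fin N, ∑ xs : Fin N → X,
        (if xs n = x then |prX xs - qX xs| else 0) = (N:ℝ) * T := by
      rw [Finset.sum_comm]
      have : ∀ n : Fin N, ∑ x : X, ∑ xs : Fin N → X,
          (if xs n = x then |prX xs - qX xs| else 0) = T := by
        intro n
        rw [Finset.sum_comm]
        rw [hTdef]
        apply Finset.sum_congr rfl
        intro xs _
        simp
      rw [Finset.sum_congr rfl fun n _ => this n, Finset.sum_const, Finset.card_univ,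
        Fintype.card_fin, nsmul_eq_mul]
    calc ∑ c, δ c = ∑ x : X, ∑ c : C, |prc c x - qc c x| := h1
      _ ≤ ∑ x : X, nQ * ∑ n : Fin N, |P.mulVec (fun c => prc c x - qc c x) n| :=
          Finset.sum_le_sum fun x _ => h2 x
      _ ≤ ∑ x : X, nQ * ∑ n : Fin N, ∑ xs : Fin N → X,
            (if xs n = x then |prX xs - qX xs| else 0) := by
          apply Finset.sum_le_sum
          intro x _
          exact mul_le_mul_of_nonneg_left (h3 x) hnQ0
      _ = nQ * ((N:ℝ) * T) := by rw [← Finset.mul_sum, h4]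
  -- step 2 : S ≤ N * ∑ c, δ c
  have hS2 : S ≤ (N:ℝ) * ∑ c, δ c := by
    have e1 : S = ∑ cs : Fin N → C, prLM cs *
        ∑ xs : Fin N → X, |(∏ m : Fin N, prc (cs m) (xs m)) - ∏ m : Fin N, qc (cs m) (xs m)| := by
      rw [hSdef, Finset.sum_comm]
      apply Finset.sum_congr rfl
      intro cs _
      rw [Finset.mul_sum]
      apply Finset.sum_congr rfl
      intro xs _
      rw [← mul_sub, abs_mul, abs_of_nonneg (hprLM0 cs)]
    have e2 : S ≤ ∑ cs : Fin N → C, prLM cs * ∑ m : Fin N, δ (cs m) := by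
      rw [e1]
      apply Finset.sum_le_sum
      intro cs _
      apply mul_le_mul_of_nonneg_left _ (hprLM0 cs)
      have := tv_prod N (fun m => prc (cs m)) (fun m => qc (cs m))
        (fun m x => hprc0 _ _) (fun m x => hqc0 _ _)
        (fun m => hprc1 _) (fun m => hqc1 _)
      exact this
    have e3 : ∑ cs : Fin N → C, prLM cs * ∑ m : Fin N, δ (cs m)
        = ∑ m : Fin N, ∑ c : C, P m c * δ c := by
      rw [Finset.sum_congr rfl fun cs _ => Finset.mul_sum Finset.univ _ (prLM cs),
        Finset.sum_comm]
      apply Finset.sum_congr rfl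
      intro m _
      rw [group_sum prLM δ m]
      apply Finset.sum_congr rfl
      intro c _
      rw [hP m c]
    have e4 : ∑ m : Fin N, ∑ c : C, P m c * δ c ≤ (N:ℝ) * ∑ c, δ c := by
      calc ∑ m : Fin N, ∑ c : C, P m c * δ c
          ≤ ∑ m : Fin N, ∑ c : C, 1 * δ c := by
            apply Finset.sum_le_sum; intro m _
            apply Finset.sum_le_sum; intro c _
            exact mul_le_mul_of_nonneg_right (hPle1 m c) (hδ0 c)
        _ = (N:ℝ) * ∑ c, δ c := by
            simp only [one_mul]
            rw [Finset.sum_const, Finset.card_univ, Fintype.card_fin, nsmul_eq_mul]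
    linarith [e2, e3, e4]
  -- step 1 : Δsum ≤ N * S
  have hdiff : ∀ (n : Fin N) (xs : Fin N → X),
      ((∑ cs : Fin N → C, if cs n = cstar xs n then
          prLM cs * ∏ m : Fin N, prc (cs m) (xs m) else 0) -
        ∑ cs : Fin N → C, if cs n = cq xs n then
          prLM cs * ∏ m : Fin N, prc (cs m) (xs m) else 0)
      ≤ ∑ cs : Fin N → C,
          |prLM cs * (∏ m : Fin N, prc (cs m) (xs m))
            - prLM cs * (∏ m : Fin N, qc (cs m) (xs m))| := by
    intro n xs
    set a := cstar xs n with ha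
    set b := cq xs n with hb
    by_cases hab : a = b
    · rw [hab, sub_self]
      exact Finset.sum_nonneg fun cs _ => abs_nonneg _
    · have hq_ab : (∑ cs : Fin N → C, if cs n = a then
            prLM cs * ∏ m : Fin N, qc (cs m) (xs m) else 0)
          ≤ ∑ cs : Fin N → C, if cs n = b then
            prLM cs * ∏ m : Fin N, qc (cs m) (xs m) else 0 := hcq xs n a
      have key : ∀ cs : Fin N → C,
          ((if cs n = a then prLM cs * ∏ m : Fin N, prc (cs m) (xs m) else 0)
            - (if cs n = a then prLM cs * ∏ m : Fin N, qc (cs m) (xs m) else 0))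
          + ((if cs n = b then prLM cs * ∏ m : Fin N, qc (cs m) (xs m) else 0)
            - (if cs n = b then prLM cs * ∏ m : Fin N, prc (cs m) (xs m) else 0))
          ≤ |prLM cs * (∏ m : Fin N, prc (cs m) (xs m))
              - prLM cs * (∏ m : Fin N, qc (cs m) (xs m))| := by
        intro cs
        by_cases h1 : cs n = a
        · have h2 : cs n ≠ b := by rw [h1]; exact hab
          rw [if_pos h1, if_pos h1, if_neg h2, if_neg h2]
          simp only [sub_zero, sub_self, add_zero]
          exact le_abs_self _
        · rw [if_neg h1, if_neg h1]
          by_cases h2 : cs n = b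
          · rw [if_pos h2, if_pos h2]
            simp only [sub_self, zero_add]
            have h3 : -(prLM cs * (∏ m : Fin N, prc (cs m) (xs m))
                - prLM cs * (∏ m : Fin N, qc (cs m) (xs m)))
                ≤ |prLM cs * (∏ m : Fin N, prc (cs m) (xs m))
                  - prLM cs * (∏ m : Fin N, qc (cs m) (xs m))| := neg_le_abs _
            linarith
          · rw [if_neg h2, if_neg h2]
            simp
      calc ((∑ cs : Fin N → C, if cs n = a then
              prLM cs * ∏ m : Fin N, prc (cs m) (xs m) else 0) -
            ∑ cs : Fin N → C, if cs n = b then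
              prLM cs * ∏ m : Fin N, prc (cs m) (xs m) else 0)
          ≤ ∑ cs : Fin N → C,
              (((if cs n = a then prLM cs * ∏ m : Fin N, prc (cs m) (xs m) else 0)
                - (if cs n = a then prLM cs * ∏ m : Fin N, qc (cs m) (xs m) else 0))
              + ((if cs n = b then prLM cs * ∏ m : Fin N, qc (cs m) (xs m) else 0)
                - (if cs n = b then prLM cs * ∏ m : Fin N, prc (cs m) (xs m) else 0))) := by
            simp only [Finset.sum_add_distrib, Finset.sum_sub_distrib]
            linarith [hq_ab]
        _ ≤ ∑ cs : Fin N → C,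
              |prLM cs * (∏ m : Fin N, prc (cs m) (xs m))
                - prLM cs * (∏ m : Fin N, qc (cs m) (xs m))| :=
            Finset.sum_le_sum fun cs _ => key cs
  set Δsum : ℝ := ∑ n : Fin N, ∑ xs : Fin N → X,
      ((∑ cs : Fin N → C, if cs n = cstar xs n then
          prLM cs * ∏ m : Fin N, prc (cs m) (xs m) else 0) -
        ∑ cs : Fin N → C, if cs n = cq xs n then
          prLM cs * ∏ m : Fin N, prc (cs m) (xs m) else 0) with hΔdef
  have hΔ0 : 0 ≤ Δsum := by
    rw [hΔdef]
    apply Finset.sum_nonneg; intro n _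
    apply Finset.sum_nonneg; intro xs _
    have := hcstar xs n (cq xs n)
    linarith
  have hΔ1 : Δsum ≤ (N:ℝ) * S := by
    rw [hΔdef]
    calc ∑ n : Fin N, ∑ xs : Fin N → X,
        ((∑ cs : Fin N → C, if cs n = cstar xs n then
            prLM cs * ∏ m : Fin N, prc (cs m) (xs m) else 0) -
          ∑ cs : Fin N → C, if cs n = cq xs n then
            prLM cs * ∏ m : Fin N, prc (cs m) (xs m) else 0)
        ≤ ∑ n : Fin N, S := by
          apply Finset.sum_le_sum
          intro n _
          rw [hSdef]
          exact Finset.sum_le_sum fun xs _ => hdiff n xs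
      _ = (N:ℝ) * S := by
          rw [Finset.sum_const, Finset.card_univ, Fintype.card_fin, nsmul_eq_mul]
  -- Pinsker
  have hpin : T^2 ≤ 2 * KL := pinsker prX qX hprX0 hqX0 habs hprX1 hqX1
  -- final arithmetic
  have hNpos : (0:ℝ) < N := by exact_mod_cast hN
  have hΔle : Δsum ≤ (N:ℝ)^3 * (nQ * T) := by
    have c1 : (N:ℝ) * S ≤ (N:ℝ) * ((N:ℝ) * ∑ c, δ c) :=
      mul_le_mul_of_nonneg_left hS2 (le_of_lt hNpos)
    have c2 : (N:ℝ) * ((N:ℝ) * ∑ c, δ c) ≤ (N:ℝ) * ((N:ℝ) * (nQ * ((N:ℝ) * T))) := by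
      apply mul_le_mul_of_nonneg_left _ (le_of_lt hNpos)
      exact mul_le_mul_of_nonneg_left hδsum (le_of_lt hNpos)
    have : (N:ℝ) * ((N:ℝ) * (nQ * ((N:ℝ) * T))) = (N:ℝ)^3 * (nQ * T) := by ring
    linarith
  have hKLif : ∑ xs : Fin N → X,
      (if 0 < prX xs then prX xs * Real.log (prX xs / qX xs) else 0) = KL := by
    rw [hKLdef]
    apply Finset.sum_congr rfl
    intro xs _
    by_cases h : 0 < prX xs
    · rw [if_pos h]
    · rw [if_neg h]
      have h0 : prX xs = 0 := le_antisymm (not_lt.mp h) (hprX0 xs)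
      rw [h0, zero_mul]
  rw [hKLif]
  have h1 : (1/(N:ℝ)) * Δsum ≤ (N:ℝ)^2 * (nQ * T) := by
    have := mul_le_mul_of_nonneg_left hΔle (le_of_lt (by positivity : (0:ℝ) < 1/(N:ℝ)))
    have heq : (1/(N:ℝ)) * ((N:ℝ)^3 * (nQ * T)) = (N:ℝ)^2 * (nQ * T) := by
      field_simp
    linarith
  have h0 : 0 ≤ (1/(N:ℝ)) * Δsum := mul_nonneg (by positivity) hΔ0
  have h2 : ((1/(N:ℝ)) * Δsum)^2 ≤ ((N:ℝ)^2 * (nQ * T))^2 := by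
    exact pow_le_pow_left₀ h0 h1 2
  have h3 : ((N:ℝ)^2 * (nQ * T))^2 = (N:ℝ)^4 * nQ^2 * T^2 := by ring
  have h4 : (N:ℝ)^4 * nQ^2 * T^2 ≤ (N:ℝ)^4 * nQ^2 * (2*KL) := by
    apply mul_le_mul_of_nonneg_left hpin
    positivity
  calc ((1/(N:ℝ)) * Δsum)^2 ≤ ((N:ℝ)^2 * (nQ * T))^2 := h2
    _ = (N:ℝ)^4 * nQ^2 * T^2 := h3
    _ ≤ (N:ℝ)^4 * nQ^2 * (2*KL) := h4
    _ = 2 * (N:ℝ)^4 * nQ^2 * KL := by ring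

end AuxLemmas

/-- assume the structure constraint holds, the language model matrix `P_C`
has full column rank, and `q(x₁ᴺ) > 0` whenever `pr(x₁ᴺ) > 0`. Then for any Bayes decision
rule and model decision rule, `(Δ̄_q)² ≤ 2 N⁴ ‖P_C⁺‖₁² · D_KL(pr(x₁ᴺ) ‖ q(x₁ᴺ))`. -/
theorem squared_error_mismatch_le_kl
    {X C : Type*} [Fintype X] [Fintype C] [Nonempty X] [Nonempty C]
    [DecidableEq X] [DecidableEq C]
    {N : ℕ} (hN : 0 < N)
    (prLM : (Fin N → C) → ℝ)            -- language model pr(c₁ᴺ)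
    (prc qc : C → X → ℝ)                -- conditionals pr(x|c), q(x|c)
    (hprLM0 : ∀ cs, 0 ≤ prLM cs) (hprLM1 : ∑ cs : Fin N → C, prLM cs = 1)
    (hprc0 : ∀ c x, 0 ≤ prc c x) (hprc1 : ∀ c, ∑ x : X, prc c x = 1)
    (hqc0 : ∀ c x, 0 ≤ qc c x) (hqc1 : ∀ c, ∑ x : X, qc c x = 1)
    -- the language model matrix P_C with entries (P_C)_{n,c} = pr_n(c)
    (P : Matrix (Fin N) C ℝ)
    (hP : ∀ (n : Fin N) (c : C), P n c = ∑ cs : Fin N → C, if cs n = c then prLM cs else 0)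
    -- full column rank
    (hrank : P.rank = Fintype.card C)
    -- absolute continuity of the observation marginals: q(x₁ᴺ) > 0 whenever pr(x₁ᴺ) > 0
    (habs : ∀ xs : Fin N → X,
      0 < (∑ cs : Fin N → C, prLM cs * ∏ m : Fin N, prc (cs m) (xs m)) →
      0 < (∑ cs : Fin N → C, prLM cs * ∏ m : Fin N, qc (cs m) (xs m)))
    -- decision rules
    (cstar cq : (Fin N → X) → Fin N → C)
    (hcstar : ∀ (xs : Fin N → X) (n : Fin N) (c : C),
      (∑ cs : Fin N → C, if cs n = c then
          prLM cs * ∏ m : Fin N, prc (cs m) (xs m) else 0) ≤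
        ∑ cs : Fin N → C, if cs n = cstar xs n then
          prLM cs * ∏ m : Fin N, prc (cs m) (xs m) else 0)
    (hcq : ∀ (xs : Fin N → X) (n : Fin N) (c : C),
      (∑ cs : Fin N → C, if cs n = c then
          prLM cs * ∏ m : Fin N, qc (cs m) (xs m) else 0) ≤
        ∑ cs : Fin N → C, if cs n = cq xs n then
          prLM cs * ∏ m : Fin N, qc (cs m) (xs m) else 0) :
    ((1 / N : ℝ) * ∑ n : Fin N, ∑ xs : Fin N → X,
        ((∑ cs : Fin N → C, if cs n = cstar xs n then
            prLM cs * ∏ m : Fin N, prc (cs m) (xs m) else 0) -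
          ∑ cs : Fin N → C, if cs n = cq xs n then
            prLM cs * ∏ m : Fin N, prc (cs m) (xs m) else 0)) ^ 2 ≤
      2 * (N : ℝ) ^ 4 * inducedL1Norm ((Pᵀ * P)⁻¹ * Pᵀ) ^ 2 *
        ∑ xs : Fin N → X,
          if 0 < (∑ cs : Fin N → C, prLM cs * ∏ m : Fin N, prc (cs m) (xs m)) then
            (∑ cs : Fin N → C, prLM cs * ∏ m : Fin N, prc (cs m) (xs m)) *
              Real.log ((∑ cs : Fin N → C, prLM cs * ∏ m : Fin N, prc (cs m) (xs m)) /
                (∑ cs : Fin N → C, prLM cs * ∏ m : Fin N, qc (cs m) (xs m)))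
          else 0 := by
  exact main_aux hN prLM prc qc hprLM0 hprLM1 hprc0 hprc1 hqc0 hqc1 P hP hrank cstar cq
    hcstar hcq
    (fun xs => ∑ cs : Fin N → C, prLM cs * ∏ m : Fin N, prc (cs m) (xs m))
    (fun xs => ∑ cs : Fin N → C, prLM cs * ∏ m : Fin N, qc (cs m) (xs m))
    (fun _ => rfl) (fun _ => rfl) habs
end

section
/- Matching observation marginals do not determine the joint distribution in the single event case: there exist finite nonempty sets 𝒳 and 𝒞 with |𝒳| > |𝒞|, a joint probability distribution pr on 𝒞 × 𝒳, and for each c ∈ 𝒞 a probability distribution q(·|c) on 𝒳, such that the model marginal q(x) := Σ_c pr(c) q(x|c) equals the true marginal pr(x) := Σ_c pr(c, x) for every x ∈ 𝒳, and yet for every Bayes decision rule c* for pr and every model decision rule c^q for the model joint q(c, x) := pr(c) q(x|c), the error mismatch Δ_q := Σ_{x} [pr(c*(x), x) − pr(c^q(x), x)] is strictly positive. -/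
/-- Matching observation marginals do not determine the joint distribution
in the single event case. There exist finite nonempty sets `𝒳 = Fin nx` and `𝒞 = Fin nc`
with `|𝒳| > |𝒞|`, a joint probability distribution `pr` on `𝒞 × 𝒳`, and conditional
distributions `q(·|c)` on `𝒳`, such that the model marginal `q(x) = Σ_c pr(c) q(x|c)`
equals the true marginal `pr(x) = Σ_c pr(c,x)` for every `x`, yet for every Bayes decision
rule `c*` for `pr` and every model decision rule `c^q` for `q(c,x) := pr(c) q(x|c)`, the
error mismatch `Δ_q = Σ_x [pr(c*(x),x) − pr(c^q(x),x)]` is strictly positive. -/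
theorem single_event_marginal_match_positive_mismatch :
    ∃ (nx nc : ℕ), 0 < nc ∧ nc < nx ∧
      ∃ (pr : Fin nc → Fin nx → ℝ) (qc : Fin nc → Fin nx → ℝ),
        -- pr is a joint probability distribution on 𝒞 × 𝒳
        (∀ c x, 0 ≤ pr c x) ∧ (∑ c : Fin nc, ∑ x : Fin nx, pr c x = 1) ∧
        -- q(·|c) is a probability distribution on 𝒳 for each c
        (∀ c x, 0 ≤ qc c x) ∧ (∀ c : Fin nc, ∑ x : Fin nx, qc c x = 1) ∧
        -- the model marginal equals the true marginal
        (∀ x : Fin nx,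
          (∑ c : Fin nc, (∑ x' : Fin nx, pr c x') * qc c x) = ∑ c : Fin nc, pr c x) ∧
        -- yet every pair of decision rules has strictly positive error mismatch
        (∀ cstar cq : Fin nx → Fin nc,
          (∀ (x : Fin nx) (c : Fin nc), pr c x ≤ pr (cstar x) x) →
          (∀ (x : Fin nx) (c : Fin nc),
            (∑ x' : Fin nx, pr c x') * qc c x ≤
              (∑ x' : Fin nx, pr (cq x) x') * qc (cq x) x) →
          0 < ∑ x : Fin nx, (pr (cstar x) x - pr (cq x) x)) := by
  refine ⟨3, 2, by norm_num, by norm_num,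
    ![![3/10, 1/10, 1/10], ![1/10, 3/10, 1/10]],
    ![![1/5, 3/5, 1/5], ![3/5, 1/5, 1/5]], ?_, ?_, ?_, ?_, ?_, ?_⟩
  · intro c x
    fin_cases c <;> fin_cases x <;> norm_num
  · simp [Fin.sum_univ_succ]; norm_num
  · intro c x
    fin_cases c <;> fin_cases x <;> norm_num
  · intro c
    fin_cases c <;> simp [Fin.sum_univ_three] <;> norm_num
  · intro x
    fin_cases x <;> simp [Fin.sum_univ_three, Fin.sum_univ_two] <;> norm_num
  · intro cstar cq hs hq
    have htwo : ∀ i : Fin 2, i = 0 ∨ i = 1 := by decide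
    have e1 : cstar 0 = 0 := by
      rcases htwo (cstar 0) with h | h
      · exact h
      · exfalso; have h1 := hs 0 0; rw [h] at h1; norm_num at h1
    have e2 : cstar 1 = 1 := by
      rcases htwo (cstar 1) with h | h
      · exfalso; have h1 := hs 1 1; rw [h] at h1; norm_num at h1
      · exact h
    have f1 : cq 0 = 1 := by
      rcases htwo (cq 0) with h | h
      · exfalso; have h1 := hq 0 1; rw [h] at h1
        norm_num [Fin.sum_univ_three, Matrix.cons_val_two, Matrix.vecHead, Matrix.vecTail] at h1
      · exact h
    have f2 : cq 1 = 0 := by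
      rcases htwo (cq 1) with h | h
      · exact h
      · exfalso; have h1 := hq 1 0; rw [h] at h1
        norm_num [Fin.sum_univ_three, Matrix.cons_val_two, Matrix.vecHead, Matrix.vecTail] at h1
    rw [Fin.sum_univ_three, e1, e2, f1, f2]
    rcases htwo (cstar 2) with e3 | e3 <;> rcases htwo (cq 2) with f3 | f3 <;>
      rw [e3, f3] <;> norm_num [Matrix.cons_val_two, Matrix.vecHead, Matrix.vecTail]
end

section
/- Necessity of the full-column-rank condition: there exist a positive integer N, finite nonempty sets 𝒳 and 𝒞 with |𝒳| > |𝒞|, a position-dependent unigram language model pr(c₁ᴺ) = ∏_{n=1}^N pr_n(c_n) whose language model matrix P_C (with entries (P_C)_{n,c} = pr_n(c)) does not have full column rank, and conditional distributions pr(·|c) and q(·|c) on 𝒳 for each c ∈ 𝒞, such that the induced observation marginals agree, q(x₁ᴺ) = pr(x₁ᴺ) for all x₁ᴺ ∈ 𝒳ᴺ, yet for every Bayes decision rule and every model decision rule the averaged error mismatch Δ̄_q is strictly positive. -/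
lemma sum_fun_one {α : Type*} [AddCommMonoid α] (f : (Fin 1 → Fin 2) → α) :
    ∑ cs : Fin 1 → Fin 2, f cs = f (fun _ => 0) + f (fun _ => 1) := by
  rw [← (Equiv.funUnique (Fin 1) (Fin 2)).symm.sum_comp]
  simp only [Fin.sum_univ_two]
  congr 1

/-- necessity of the full-column-rank condition: there exist a positive
integer `N`, finite nonempty sets `𝒳 = Fin nx` and `𝒞 = Fin nc` with `|𝒳| > |𝒞|`, a
position-dependent unigram language model `pr(c₁ᴺ) = ∏_n pr_n(c_n)` whose language model
matrix `P_C` (entries `(P_C)_{n,c} = pr_n(c)`) does not have full column rank, and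
conditionals `pr(·|c)`, `q(·|c)` on `𝒳`, such that the induced observation marginals agree,
`q(x₁ᴺ) = pr(x₁ᴺ)` for all `x₁ᴺ`, yet for every Bayes decision rule and every model
decision rule the averaged error mismatch `Δ̄_q` is strictly positive. -/
theorem full_column_rank_necessary :
    ∃ (N nx nc : ℕ), 0 < N ∧ 0 < nc ∧ nc < nx ∧
      ∃ (prn : Fin N → Fin nc → ℝ) (prc qc : Fin nc → Fin nx → ℝ),
        -- each pr_n is a probability distribution on 𝒞 (unigram language model)
        (∀ n c, 0 ≤ prn n c) ∧ (∀ n : Fin N, ∑ c : Fin nc, prn n c = 1) ∧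
        -- pr(·|c), q(·|c) are probability distributions on 𝒳
        (∀ c x, 0 ≤ prc c x) ∧ (∀ c : Fin nc, ∑ x : Fin nx, prc c x = 1) ∧
        (∀ c x, 0 ≤ qc c x) ∧ (∀ c : Fin nc, ∑ x : Fin nx, qc c x = 1) ∧
        -- the language model matrix P_C does NOT have full column rank
        (Matrix.rank (Matrix.of fun (n : Fin N) (c : Fin nc) =>
            ∑ cs : Fin N → Fin nc,
              if cs n = c then ∏ m : Fin N, prn m (cs m) else 0) ≠ nc) ∧
        -- the observation-sequence marginals agree: q(x₁ᴺ) = pr(x₁ᴺ)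
        (∀ xs : Fin N → Fin nx,
          (∑ cs : Fin N → Fin nc,
              (∏ m : Fin N, prn m (cs m)) * ∏ m : Fin N, qc (cs m) (xs m)) =
            ∑ cs : Fin N → Fin nc,
              (∏ m : Fin N, prn m (cs m)) * ∏ m : Fin N, prc (cs m) (xs m)) ∧
        -- yet every pair of decision rules has strictly positive averaged error mismatch
        (∀ cstar cq : (Fin N → Fin nx) → Fin N → Fin nc,
          (∀ (xs : Fin N → Fin nx) (n : Fin N) (c : Fin nc),
            (∑ cs : Fin N → Fin nc, if cs n = c then
                (∏ m : Fin N, prn m (cs m)) * ∏ m : Fin N, prc (cs m) (xs m) else 0) ≤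
              ∑ cs : Fin N → Fin nc, if cs n = cstar xs n then
                (∏ m : Fin N, prn m (cs m)) * ∏ m : Fin N, prc (cs m) (xs m) else 0) →
          (∀ (xs : Fin N → Fin nx) (n : Fin N) (c : Fin nc),
            (∑ cs : Fin N → Fin nc, if cs n = c then
                (∏ m : Fin N, prn m (cs m)) * ∏ m : Fin N, qc (cs m) (xs m) else 0) ≤
              ∑ cs : Fin N → Fin nc, if cs n = cq xs n then
                (∏ m : Fin N, prn m (cs m)) * ∏ m : Fin N, qc (cs m) (xs m) else 0) →
          0 < (1 / N : ℝ) * ∑ n : Fin N, ∑ xs : Fin N → Fin nx,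
            ((∑ cs : Fin N → Fin nc, if cs n = cstar xs n then
                (∏ m : Fin N, prn m (cs m)) * ∏ m : Fin N, prc (cs m) (xs m) else 0) -
              ∑ cs : Fin N → Fin nc, if cs n = cq xs n then
                (∏ m : Fin N, prn m (cs m)) * ∏ m : Fin N, prc (cs m) (xs m) else 0)) := by
  refine ⟨1, 3, 2, one_pos, two_pos, by norm_num,
    (fun _ => ![1/2, 1/2]), ![![1/2, 1/2, 0], ![0, 1/2, 1/2]],
    ![![0, 1/2, 1/2], ![1/2, 1/2, 0]], ?_, ?_, ?_, ?_, ?_, ?_, ?_, ?_, ?_⟩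
  · intro n c; fin_cases c <;> norm_num
  · intro n; simp [Fin.sum_univ_two]; norm_num
  · intro c x; fin_cases c <;> fin_cases x <;> norm_num
  · intro c; fin_cases c <;> simp [Fin.sum_univ_three] <;> norm_num
  · intro c x; fin_cases c <;> fin_cases x <;> norm_num
  · intro c; fin_cases c <;> simp [Fin.sum_univ_three] <;> norm_num
  · intro h
    have hle := Matrix.rank_le_card_height (Matrix.of fun (n : Fin 1) (c : Fin 2) =>
      ∑ cs : Fin 1 → Fin 2, if cs n = c then ∏ m : Fin 1, (fun (_ : Fin 1) => ![(1:ℝ)/2, 1/2]) m (cs m) else 0)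
    rw [h] at hle
    simp at hle
  · intro xs
    rw [sum_fun_one, sum_fun_one]
    simp only [Fin.prod_univ_one]
    generalize xs 0 = x
    fin_cases x <;> norm_num
  · intro cstar cq h1 h2
    rw [Fin.sum_univ_one]
    apply mul_pos (by norm_num)
    apply Finset.sum_pos'
    · intro xs _
      have := h1 xs 0 (cq xs 0)
      linarith
    · refine ⟨(fun _ => 0), Finset.mem_univ _, ?_⟩
      have hq : cq (fun _ => (0 : Fin 3)) 0 = 1 := by
        have h := h2 (fun _ => 0) 0 1
        rw [sum_fun_one, sum_fun_one] at h
        generalize cq (fun _ => (0 : Fin 3)) 0 = d at h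
        fin_cases d
        · simp only [Fin.prod_univ_one] at h
          norm_num at h
        · rfl
      have hs : cstar (fun _ => (0 : Fin 3)) 0 = 0 := by
        have h := h1 (fun _ => 0) 0 0
        rw [sum_fun_one, sum_fun_one] at h
        generalize cstar (fun _ => (0 : Fin 3)) 0 = d at h
        fin_cases d
        · rfl
        · simp only [Fin.prod_univ_one] at h
          norm_num at h
      rw [hq, hs, sum_fun_one, sum_fun_one]
      simp only [Fin.prod_univ_one]
      norm_num
end

section
/- Necessity of the structure assumption: there exist a positive integer N, finite nonempty sets 𝒳 and 𝒞 with |𝒳| > |𝒞|, a true joint distribution of the form pr(c₁ᴺ, x₁ᴺ) = ∏_{n=1}^N pr_n(c_n, x_n) whose language model matrix P_C (with entries (P_C)_{n,c} = pr_n(c) := Σ_x pr_n(c, x)) has full column rank, and conditional distributions q(·|c) on 𝒳 for each c ∈ 𝒞, such that the model joint q(c₁ᴺ, x₁ᴺ) := pr(c₁ᴺ) · ∏_{n=1}^N q(x_n|c_n) (with pr(c₁ᴺ) := Σ_{x₁ᴺ} pr(c₁ᴺ, x₁ᴺ)) satisfies q(x₁ᴺ) = pr(x₁ᴺ) for all x₁ᴺ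 ∈ 𝒳ᴺ, yet for every Bayes decision rule and every model decision rule the averaged error mismatch Δ̄_q is strictly positive. -/
private lemma sum_pi_prod' {n : ℕ} {α : Fin n → Type*} [∀ i, Fintype (α i)]
    (f : ∀ i, α i → ℝ) :
    ∑ g : (∀ i, α i), ∏ i, f i (g i) = ∏ i, ∑ a : α i, f i a := by
  rw [Finset.prod_univ_sum, Fintype.piFinset_univ]

private lemma sum_fn22 (f : (Fin 2 → Fin 2) → ℝ) :
    ∑ cs : Fin 2 → Fin 2, f cs = f ![0,0] + f ![0,1] + f ![1,0] + f ![1,1] := by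
  rw [← (finTwoArrowEquiv (Fin 2)).symm.sum_comp]
  simp [Fintype.sum_prod_type, Fin.sum_univ_succ, finTwoArrowEquiv]
  ring

private lemma sum_fn23 (f g : Fin 3 → ℝ) :
    ∑ x : Fin 2 → Fin 3, f (x 0) * g (x 1) = (∑ a : Fin 3, f a) * (∑ a : Fin 3, g a) := by
  rw [← (finTwoArrowEquiv (Fin 3)).symm.sum_comp, Finset.sum_mul_sum]
  simp [Fintype.sum_prod_type, finTwoArrowEquiv]

private lemma fin2_cases (i : Fin 2) : i = 0 ∨ i = 1 := by omega

/-- necessity of the structure assumption: there exist a positive integer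
`N`, finite nonempty sets `𝒳 = Fin nx` and `𝒞 = Fin nc` with `|𝒳| > |𝒞|`, a true joint
distribution `pr(c₁ᴺ,x₁ᴺ) = ∏_n pr_n(c_n,x_n)` whose language model matrix `P_C`
(entries `(P_C)_{n,c} = pr_n(c) = Σ_x pr_n(c,x)`) has full column rank, and conditionals
`q(·|c)` on `𝒳`, such that the model joint `q(c₁ᴺ,x₁ᴺ) := pr(c₁ᴺ)·∏_n q(x_n|c_n)`
(with `pr(c₁ᴺ) = Σ_{x₁ᴺ} pr(c₁ᴺ,x₁ᴺ)`) satisfies `q(x₁ᴺ) = pr(x₁ᴺ)` for all `x₁ᴺ`, yet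
for every Bayes decision rule and every model decision rule the averaged error mismatch
`Δ̄_q` is strictly positive. -/
theorem structure_assumption_necessary :
    ∃ (N nx nc : ℕ), 0 < N ∧ 0 < nc ∧ nc < nx ∧
      ∃ (prn : Fin N → Fin nc → Fin nx → ℝ) (qc : Fin nc → Fin nx → ℝ),
        -- each pr_n is a joint probability distribution on 𝒞 × 𝒳
        (∀ n c x, 0 ≤ prn n c x) ∧
        (∀ n : Fin N, ∑ c : Fin nc, ∑ x : Fin nx, prn n c x = 1) ∧
        -- q(·|c) is a probability distribution on 𝒳 for each c
        (∀ c x, 0 ≤ qc c x) ∧ (∀ c : Fin nc, ∑ x : Fin nx, qc c x = 1) ∧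
        -- the language model matrix P_C, (P_C)_{n,c} = pr_n(c), has full column rank
        (Matrix.rank (Matrix.of fun (n : Fin N) (c : Fin nc) =>
            ∑ x : Fin nx, prn n c x) = nc) ∧
        -- the observation-sequence marginals agree: q(x₁ᴺ) = pr(x₁ᴺ),
        -- where q(c₁ᴺ,x₁ᴺ) = pr(c₁ᴺ)·∏ q(x_n|c_n) and pr(c₁ᴺ) = Σ_{x₁ᴺ} pr(c₁ᴺ,x₁ᴺ)
        (∀ xs : Fin N → Fin nx,
          (∑ cs : Fin N → Fin nc,
              (∑ xs' : Fin N → Fin nx, ∏ m : Fin N, prn m (cs m) (xs' m)) *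
                ∏ m : Fin N, qc (cs m) (xs m)) =
            ∑ cs : Fin N → Fin nc, ∏ m : Fin N, prn m (cs m) (xs m)) ∧
        -- yet every pair of decision rules has strictly positive averaged error mismatch
        (∀ cstar cq : (Fin N → Fin nx) → Fin N → Fin nc,
          (∀ (xs : Fin N → Fin nx) (n : Fin N) (c : Fin nc),
            (∑ cs : Fin N → Fin nc, if cs n = c then
                ∏ m : Fin N, prn m (cs m) (xs m) else 0) ≤
              ∑ cs : Fin N → Fin nc, if cs n = cstar xs n then
                ∏ m : Fin N, prn m (cs m) (xs m) else 0) →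
          (∀ (xs : Fin N → Fin nx) (n : Fin N) (c : Fin nc),
            (∑ cs : Fin N → Fin nc, if cs n = c then
                (∑ xs' : Fin N → Fin nx, ∏ m : Fin N, prn m (cs m) (xs' m)) *
                  ∏ m : Fin N, qc (cs m) (xs m) else 0) ≤
              ∑ cs : Fin N → Fin nc, if cs n = cq xs n then
                (∑ xs' : Fin N → Fin nx, ∏ m : Fin N, prn m (cs m) (xs' m)) *
                  ∏ m : Fin N, qc (cs m) (xs m) else 0) →
          0 < (1 / N : ℝ) * ∑ n : Fin N, ∑ xs : Fin N → Fin nx,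
            ((∑ cs : Fin N → Fin nc, if cs n = cstar xs n then
                ∏ m : Fin N, prn m (cs m) (xs m) else 0) -
              ∑ cs : Fin N → Fin nc, if cs n = cq xs n then
                ∏ m : Fin N, prn m (cs m) (xs m) else 0)) := by
  refine ⟨2, 3, 2, by norm_num, by norm_num, by norm_num, ?_⟩
  set prn : Fin 2 → Fin 2 → Fin 3 → ℝ :=
    ![![![0, 1/4, 1/4], ![1/4, 1/4, 0]], ![![1/8, 1/8, 0], ![0, 3/8, 3/8]]] with hprn
  set qc : Fin 2 → Fin 3 → ℝ := ![![1/2, 1/2, 0], ![0, 1/2, 1/2]] with hqc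
  refine ⟨prn, qc, ?_, ?_, ?_, ?_, ?_, ?_, ?_⟩
  · intro n c x; fin_cases n <;> fin_cases c <;> fin_cases x <;> norm_num [hprn]
  · intro n; fin_cases n <;> norm_num [hprn, Fin.sum_univ_succ]
  · intro c x; fin_cases c <;> fin_cases x <;> norm_num [hqc]
  · intro c; fin_cases c <;> norm_num [hqc, Fin.sum_univ_succ]
  · -- rank
    have hM : (Matrix.of fun (n : Fin 2) (c : Fin 2) => ∑ x : Fin 3, prn n c x)
        = Matrix.of ![![(1:ℝ)/2, 1/2], ![1/4, 3/4]] := by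
      funext n c; fin_cases n <;> fin_cases c <;> norm_num [hprn, Fin.sum_univ_succ]
    rw [hM]
    have h : IsUnit (Matrix.of ![![(1:ℝ)/2,1/2], ![1/4,3/4]]) := by
      rw [Matrix.isUnit_iff_isUnit_det, isUnit_iff_ne_zero, Matrix.det_fin_two]
      norm_num
    simpa using Matrix.rank_of_isUnit _ h
  · -- marginals agree
    intro xs
    have hmarg1 : ∀ (m : Fin 2) (y : Fin 3),
        ∑ c : Fin 2, (∑ x : Fin 3, prn m c x) * qc c y = ∑ c : Fin 2, prn m c y := by
      intro m y; fin_cases m <;> fin_cases y <;>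
        norm_num [hprn, hqc, Fin.sum_univ_succ]
    have step : ∀ cs : Fin 2 → Fin 2,
        (∑ xs' : Fin 2 → Fin 3, ∏ m, prn m (cs m) (xs' m)) * ∏ m, qc (cs m) (xs m)
          = ∏ m, ((∑ x : Fin 3, prn m (cs m) x) * qc (cs m) (xs m)) := by
      intro cs
      rw [sum_pi_prod' (fun m x => prn m (cs m) x), Finset.prod_mul_distrib]
    rw [Finset.sum_congr rfl (fun cs _ => step cs),
      sum_pi_prod' (fun m c => (∑ x : Fin 3, prn m c x) * qc c (xs m)),
      sum_pi_prod' (fun m c => prn m c (xs m))]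
    exact Finset.prod_congr rfl fun m _ => hmarg1 m (xs m)
  · -- positivity
    intro cstar cq h1 h2
    set xs0 : Fin 2 → Fin 3 := ![0, 1] with hxs0
    have hF : ∀ c : Fin 2,
        (∑ cs : Fin 2 → Fin 2, if cs 0 = c then ∏ m, prn m (cs m) (xs0 m) else 0)
          = ![(0:ℝ), 1/8] c := by
      intro c; rw [sum_fn22]; fin_cases c <;>
        norm_num [hprn, hxs0, Fin.prod_univ_succ]
    have hG : ∀ c : Fin 2,
        (∑ cs : Fin 2 → Fin 2, if cs 0 = c then
            (∑ xs' : Fin 2 → Fin 3, ∏ m, prn m (cs m) (xs' m)) *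
              ∏ m, qc (cs m) (xs0 m) else 0) = ![(1:ℝ)/8, 0] c := by
      intro c; rw [sum_fn22]; fin_cases c <;>
        norm_num [hprn, hqc, hxs0, Fin.prod_univ_succ, sum_fn23, Fin.sum_univ_succ]
    have hcq : cq xs0 0 = 0 := by
      rcases fin2_cases (cq xs0 0) with h0 | h1
      · exact h0
      · exfalso
        have h := h2 xs0 0 0
        rw [h1, hG 0, hG 1] at h
        norm_num at h
    have key : (0:ℝ) < (1:ℝ)/8 ∧ True := ⟨by norm_num, trivial⟩
    have term_nonneg : ∀ (n : Fin 2) (xs : Fin 2 → Fin 3),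
        (0:ℝ) ≤ (∑ cs : Fin 2 → Fin 2, if cs n = cstar xs n then
            ∏ m, prn m (cs m) (xs m) else 0) -
          ∑ cs : Fin 2 → Fin 2, if cs n = cq xs n then
            ∏ m, prn m (cs m) (xs m) else 0 := by
      intro n xs; exact sub_nonneg.mpr (h1 xs n (cq xs n))
    have pos0 : (0:ℝ) < ∑ xs : Fin 2 → Fin 3,
        ((∑ cs : Fin 2 → Fin 2, if cs 0 = cstar xs 0 then
            ∏ m, prn m (cs m) (xs m) else 0) -
          ∑ cs : Fin 2 → Fin 2, if cs 0 = cq xs 0 then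
            ∏ m, prn m (cs m) (xs m) else 0) := by
      apply Finset.sum_pos' (fun xs _ => term_nonneg 0 xs)
      refine ⟨xs0, Finset.mem_univ _, ?_⟩
      have hA := h1 xs0 0 1
      rw [hF 1] at hA
      have hB : (∑ cs : Fin 2 → Fin 2, if cs 0 = cq xs0 0 then
          ∏ m, prn m (cs m) (xs0 m) else 0) = 0 := by
        rw [hcq, hF 0]; norm_num
      rw [hB]
      simp only [Matrix.cons_val_one, Matrix.head_cons, Matrix.cons_val_zero] at hA
      linarith
    apply mul_pos (by norm_num)
    apply Finset.sum_pos' (fun n _ => Finset.sum_nonneg (fun xs _ => term_nonneg n xs))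
    exact ⟨0, Finset.mem_univ _, pos0⟩
end
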